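/- arXiv:1905.04560 — 7 statements merged into one kernel-verified Lean document; each statement's English description precedes it below -/
import Mathlib

section
/- Let J⊆ℝ be an interval, φ: J×ℝⁿ→ℝ of class C¹, and x: J→ℝⁿ absolutely continuous. Let N={t∈J: φ(t,x(t))=0}. Then for almost every t∈N the derivative ẋ(t) exists and ∂ₜφ(t,x(t)) + ⟨ẋ(t), ∇ₓφ(t,x(t))⟩ = 0. -/
open MeasureTheory Set Filter Metric Topology

noncomputable section

/-- `x` is absolutely continuous on `I ⊆ ℝ`: it is an indefinite integral of an
integrable function. -/
def AbsContOn {E : Type*} [NormedAddCommGroup E] [NormedSpace ℝ E] [CompleteSpace E]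
    (x : ℝ → E) (I : Set ℝ) : Prop :=
  ∃ x' : ℝ → E, IntegrableOn x' I ∧ ∀ s ∈ I, ∀ t ∈ I, x t = x s + ∫ u in s..t, x' u

/-- Almost every point of a set `s ⊆ ℝ` is an accumulation point of `s`. -/
lemma aux_cluster (s : Set ℝ) :
    ∀ᵐ t ∂(volume.restrict s), (𝓝[s \ {t}] t).NeBot := by
  filter_upwards [Besicovitch.ae_tendsto_measure_inter_div volume s] with t ht
  rw [← mem_closure_iff_nhdsWithin_neBot, Metric.mem_closure_iff]
  intro ε hε
  by_contra hcon
  push_neg at hcon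
  have hz : ∀ r ∈ Set.Ioo (0:ℝ) ε, volume (s ∩ closedBall t r) = 0 := by
    intro r hr
    have hsub : s ∩ closedBall t r ⊆ {t} := by
      intro b hb
      by_contra hbt
      have h1 : ε ≤ dist t b := hcon b ⟨hb.1, hbt⟩
      have h2 : dist b t ≤ r := mem_closedBall.1 hb.2
      rw [dist_comm] at h2
      linarith [hr.2]
    exact measure_mono_null hsub (by simp)
  have h1 : ∀ᶠ r in 𝓝[>] (0:ℝ),
      volume (s ∩ closedBall t r) / volume (closedBall t r) = 0 := by
    filter_upwards [Ioo_mem_nhdsGT_of_mem (Set.mem_Ico.2 ⟨le_rfl, hε⟩)] with r hr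
    rw [hz r hr, ENNReal.zero_div]
  have h2 : Tendsto (fun _ : ℝ => (0 : ENNReal)) (𝓝[>] (0:ℝ)) (𝓝 1) :=
    ht.congr' h1
  have := tendsto_nhds_unique h2 tendsto_const_nhds
  simp at this

/-- If a function vanishing on `s` (and at `t`) has a derivative at an accumulation
point `t` of `s`, then this derivative vanishes. -/
lemma aux_deriv_zero {g : ℝ → ℝ} {s : Set ℝ} {t c : ℝ}
    (hclus : (𝓝[s \ {t}] t).NeBot) (hg : HasDerivAt g c t)
    (h0 : ∀ u ∈ s, g u = 0) (hgt : g t = 0) : c = 0 := by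
  have h1 : Tendsto (slope g t) (𝓝[s \ {t}] t) (𝓝 c) :=
    (hasDerivAt_iff_tendsto_slope.1 hg).mono_left
      (nhdsWithin_mono t fun u hu => hu.2)
  have h2 : Tendsto (slope g t) (𝓝[s \ {t}] t) (𝓝 0) := by
    apply tendsto_const_nhds.congr'
    filter_upwards [self_mem_nhdsWithin] with u hu
    simp [slope, h0 u hu.1, hgt]
  exact (tendsto_nhds_unique h1 h2).symm ▸ rfl

/-- Lebesgue differentiation: an indefinite integral of an integrable function is
differentiable almost everywhere, with derivative the integrand. -/
lemma aux_ftc_ae {E : Type*} [NormedAddCommGroup E] [NormedSpace ℝ E] [CompleteSpace E]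
    {h : ℝ → E} (hh : Integrable h) (a : ℝ) :
    ∀ᵐ t ∂(volume : Measure ℝ), HasDerivAt (fun u => ∫ v in a..u, h v) (h t) t := by
  have hloc : LocallyIntegrable h volume := hh.locallyIntegrable
  filter_upwards [(Besicovitch.vitaliFamily (volume : Measure ℝ)).ae_tendsto_average_norm_sub
    hloc] with t ht
  have key : Tendsto (fun r : ℝ => ⨍ y in closedBall t r, ‖h y - h t‖) (𝓝[>] 0) (𝓝 0) :=
    ht.comp (Besicovitch.tendsto_filterAt volume t)
  rw [hasDerivAt_iff_isLittleO, Asymptotics.isLittleO_iff]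
  intro ε hε
  have hε2 : (0:ℝ) < ε / 2 := by linarith
  have hev : ∀ᶠ r in 𝓝[>] (0:ℝ), ⨍ y in closedBall t r, ‖h y - h t‖ < ε / 2 :=
    key.eventually (gt_mem_nhds hε2)
  rw [eventually_nhdsWithin_iff] at hev
  rcases Metric.eventually_nhds_iff.1 hev with ⟨δ, hδ0, hδ⟩
  filter_upwards [Metric.ball_mem_nhds t hδ0] with u hu
  rcases eq_or_ne u t with rfl | hut
  · simp
  · set r := |u - t| with hrdef
    have hr0 : 0 < r := abs_pos.2 (sub_ne_zero.2 hut)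
    have hrδ : r < δ := by
      rw [mem_ball, Real.dist_eq] at hu; exact hu
    have havg : ⨍ y in closedBall t r, ‖h y - h t‖ < ε / 2 := by
      have hd : dist r 0 < δ := by
        rw [Real.dist_0_eq_abs, abs_of_pos hr0]; exact hrδ
      exact hδ hd hr0
    have hIi : IntervalIntegrable h volume t u := hh.intervalIntegrable
    have hIa : IntervalIntegrable h volume a t := hh.intervalIntegrable
    have hsplit : (∫ v in a..u, h v) - (∫ v in a..t, h v) = ∫ v in t..u, h v := by
      rw [← intervalIntegral.integral_add_adjacent_intervals hIa hIi]; abel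
    have hconst : (u - t) • h t = ∫ _ in t..u, h t := by
      rw [intervalIntegral.integral_const]
    have hdiff : (∫ v in a..u, h v) - (∫ v in a..t, h v) - (u - t) • h t
        = ∫ v in t..u, (h v - h t) := by
      rw [hsplit, hconst,
        intervalIntegral.integral_sub hIi
          (intervalIntegrable_const (μ := volume) (c := h t) (a := t) (b := u))]
    rw [hdiff]
    have hsubset : Set.uIoc t u ⊆ closedBall t r := by
      intro v hv
      rw [Real.closedBall_eq_Icc]
      rcases Set.mem_uIoc.1 hv with ⟨h1, h2⟩ | ⟨h1, h2⟩
      · constructor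
        · have : t - r ≤ t := by linarith
          linarith
        · have : u ≤ t + r := by
            have := le_abs_self (u - t); linarith
          linarith
      · constructor
        · have : t - r ≤ u := by
            have := neg_abs_le (u - t); linarith
          linarith
        · linarith
    have hint : IntegrableOn (fun v => ‖h v - h t‖) (closedBall t r) volume := by
      apply Integrable.norm
      exact hh.integrableOn.sub (integrableOn_const measure_closedBall_lt_top.ne)
    have hbound : ‖∫ v in t..u, (h v - h t)‖ ≤ ∫ v in closedBall t r, ‖h v - h t‖ := by
      calc ‖∫ v in t..u, (h v - h t)‖ ≤ ∫ v in Set.uIoc t u, ‖h v - h t‖ :=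
            intervalIntegral.norm_integral_le_integral_norm_uIoc
        _ ≤ ∫ v in closedBall t r, ‖h v - h t‖ := by
            apply setIntegral_mono_set hint
            · filter_upwards with v using norm_nonneg _
            · exact HasSubset.Subset.eventuallyLE hsubset
    have hvol : (volume (closedBall t r)).toReal = 2 * r := by
      rw [Real.volume_closedBall]
      rw [ENNReal.toReal_ofReal (by linarith)]
    have haveq : ∫ v in closedBall t r, ‖h v - h t‖
        = (volume (closedBall t r)).toReal * ⨍ y in closedBall t r, ‖h y - h t‖ := by
      rw [setAverage_eq, measureReal_def, smul_eq_mul, ← mul_assoc, mul_inv_cancel₀, one_mul]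
      rw [hvol]; positivity
    calc ‖∫ v in t..u, (h v - h t)‖ ≤ ∫ v in closedBall t r, ‖h v - h t‖ := hbound
      _ = 2 * r * ⨍ y in closedBall t r, ‖h y - h t‖ := by rw [haveq, hvol]
      _ ≤ 2 * r * (ε / 2) := by
          apply mul_le_mul_of_nonneg_left havg.le (by positivity)
      _ = ε * ‖u - t‖ := by rw [Real.norm_eq_abs]; ring

/-- The non-interior points of an `OrdConnected` subset of `ℝ` form a null set. -/
lemma aux_interior_ae {J : Set ℝ} (hJ : J.OrdConnected) :
    ∀ᵐ t ∂(volume.restrict J), t ∈ interior J := by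
  have hsub : J \ interior J ⊆ {t | IsLeast J t} ∪ {t | IsGreatest J t} := by
    rintro t ⟨htJ, hti⟩
    by_contra hcon
    simp only [mem_setOf_eq, IsLeast, IsGreatest, not_and, mem_union, not_or,
      lowerBounds, upperBounds, mem_setOf_eq] at hcon
    obtain ⟨h1, h2⟩ := hcon
    have h1' := h1 htJ; have h2' := h2 htJ
    push_neg at h1' h2'
    obtain ⟨b, hbJ, hbt⟩ := h1'
    obtain ⟨c, hcJ, hct⟩ := h2'
    apply hti
    rw [mem_interior]
    exact ⟨Set.Ioo b c, fun v hv => hJ.out hbJ hcJ ⟨hv.1.le, hv.2.le⟩,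
      isOpen_Ioo, ⟨hbt, hct⟩⟩
  have hnull : volume (J \ interior J) = 0 := by
    apply measure_mono_null hsub
    apply Set.Countable.measure_zero
    have h1 : {t | IsLeast J t}.Subsingleton := fun a ha b hb => ha.unique hb
    have h2 : {t | IsGreatest J t}.Subsingleton := fun a ha b hb => ha.unique hb
    exact (h1.countable.union h2.countable)
  have h1 : ∀ᵐ t ∂(volume : Measure ℝ), t ∈ J → t ∈ interior J := by
    rw [ae_iff]
    apply measure_mono_null _ hnull
    intro t ht
    simp only [mem_setOf_eq, Classical.not_imp] at ht
    exact ⟨ht.1, ht.2⟩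
  filter_upwards [ae_restrict_of_ae h1, ae_restrict_mem hJ.measurableSet] with t h ht
  exact h ht

/-- If `φ : J × ℝⁿ → ℝ` is of class `C¹` and `x` is absolutely continuous on the
interval `J`, then for a.e. `t` in `N = {t ∈ J | φ (t, x t) = 0}` the derivative
`ẋ(t)` exists and `∂ₜφ(t, x t) + ⟨ẋ(t), ∇ₓφ(t, x t)⟩ = 0`. -/
theorem statement2 {n : ℕ} (J : Set ℝ) (hJ : J.OrdConnected)
    (φ : ℝ → EuclideanSpace ℝ (Fin n) → ℝ)
    (hφ : ContDiffOn ℝ 1 (fun p : ℝ × EuclideanSpace ℝ (Fin n) => φ p.1 p.2)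
      (J ×ˢ (univ : Set (EuclideanSpace ℝ (Fin n)))))
    (x : ℝ → EuclideanSpace ℝ (Fin n)) (hx : AbsContOn x J) :
    ∀ᵐ t ∂(volume.restrict {t ∈ J | φ t (x t) = 0}),
      ∃ d : EuclideanSpace ℝ (Fin n), HasDerivAt x d t ∧
        deriv (fun s => φ s (x t)) t + (inner ℝ d (gradient (φ t) (x t)) : ℝ) = 0 := by
  classical
  set N := {t ∈ J | φ t (x t) = 0} with hN
  rcases J.eq_empty_or_nonempty with hJe | ⟨s₀, hs₀⟩
  · have hNe : N = ∅ := by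
      apply Set.eq_empty_of_subset_empty
      rw [← hJe]
      exact Set.sep_subset _ _
    rw [hNe]
    simp
  obtain ⟨x', hx'int, hrep⟩ := hx
  -- the globally integrable extension of x'
  set h : ℝ → EuclideanSpace ℝ (Fin n) := J.indicator x' with hhdef
  have hhint : Integrable h := by
    rw [hhdef, integrable_indicator_iff hJ.measurableSet]
    exact hx'int
  set G : ℝ → EuclideanSpace ℝ (Fin n) := fun u => ∫ v in s₀..u, h v with hGdef
  -- x agrees with x s₀ + G on J
  have hxG : ∀ u ∈ J, x u = x s₀ + G u := by
    intro u hu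
    rw [hrep s₀ hs₀ u hu]
    congr 1
    apply intervalIntegral.integral_congr
    intro v hv
    have hvJ : v ∈ J := hJ.uIcc_subset hs₀ hu hv
    simp [hhdef, Set.indicator_of_mem hvJ]
  -- almost everywhere facts transferred to the restricted measure
  have hmono : volume.restrict N ≤ volume.restrict J :=
    Measure.restrict_mono (Set.sep_subset _ _) le_rfl
  have hae1 : ∀ᵐ t ∂(volume.restrict N), t ∈ interior J :=
    ae_mono hmono (aux_interior_ae hJ)
  have hae2 : ∀ᵐ t ∂(volume.restrict N), HasDerivAt G (h t) t :=
    ae_mono hmono (ae_restrict_of_ae (aux_ftc_ae hhint s₀))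
  have hae3 : ∀ᵐ t ∂(volume.restrict N), (𝓝[N \ {t}] t).NeBot := aux_cluster N
  filter_upwards [hae1, hae2, hae3] with t htint htG hclus
  have htJ : t ∈ J := interior_subset htint
  -- derivative of x at t
  have hxd : HasDerivAt x (x' t) t := by
    have h1 : HasDerivAt (fun u => x s₀ + G u) (h t) t := htG.const_add (x s₀)
    have h2 : x =ᶠ[𝓝 t] fun u => x s₀ + G u := by
      filter_upwards [isOpen_interior.mem_nhds htint] with u hu
      exact hxG u (interior_subset hu)
    have h3 : h t = x' t := Set.indicator_of_mem htJ x'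
    exact h3 ▸ h1.congr_of_eventuallyEq h2
  refine ⟨x' t, hxd, ?_⟩
  -- differentiability of φ at (t, x t)
  set f : ℝ × EuclideanSpace ℝ (Fin n) → ℝ := fun p => φ p.1 p.2 with hfdef
  have hnhds : J ×ˢ (univ : Set (EuclideanSpace ℝ (Fin n))) ∈ 𝓝 (t, x t) := by
    apply _root_.mem_nhds_iff.2
    exact ⟨interior J ×ˢ univ, Set.prod_mono interior_subset subset_rfl,
      isOpen_interior.prod isOpen_univ, ⟨htint, mem_univ _⟩⟩
  have hfd : DifferentiableAt ℝ f (t, x t) :=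
    (hφ.contDiffAt hnhds).differentiableAt one_ne_zero
  set L := fderiv ℝ f (t, x t) with hLdef
  have hL : HasFDerivAt f L (t, x t) := hfd.hasFDerivAt
  -- chain rule for g s = φ s (x s)
  have hcurve : HasDerivAt (fun s => (s, x s)) ((1 : ℝ), x' t) t :=
    HasDerivAt.prodMk (hasDerivAt_id t) hxd
  have hc : HasDerivAt (fun s => φ s (x s)) (L (1, x' t)) t :=
    by have := HasFDerivAt.comp_hasDerivAt t hL hcurve; exact this
  -- partial derivative in time
  have hline : HasDerivAt (fun s => (s, x t)) ((1 : ℝ), (0 : EuclideanSpace ℝ (Fin n))) t :=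
    HasDerivAt.prodMk (hasDerivAt_id t) (hasDerivAt_const t (x t))
  have hpart : HasDerivAt (fun s => φ s (x t)) (L (1, 0)) t :=
    by have := HasFDerivAt.comp_hasDerivAt t hL hline; exact this
  -- gradient in space
  have hinr : HasFDerivAt (fun v : EuclideanSpace ℝ (Fin n) => ((t : ℝ), v))
      ((0 : EuclideanSpace ℝ (Fin n) →L[ℝ] ℝ).prod (ContinuousLinearMap.id ℝ (EuclideanSpace ℝ (Fin n)))) (x t) :=
    HasFDerivAt.prodMk (hasFDerivAt_const t (x t)) (hasFDerivAt_id (x t))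
  have hgradF : HasFDerivAt (φ t)
      (L.comp ((0 : EuclideanSpace ℝ (Fin n) →L[ℝ] ℝ).prod (ContinuousLinearMap.id ℝ (EuclideanSpace ℝ (Fin n))))) (x t) :=
    hL.comp (x t) hinr
  have hgrad : HasGradientAt (φ t)
      ((InnerProductSpace.toDual ℝ (EuclideanSpace ℝ (Fin n))).symm
        (L.comp ((0 : EuclideanSpace ℝ (Fin n) →L[ℝ] ℝ).prod (ContinuousLinearMap.id ℝ (EuclideanSpace ℝ (Fin n)))))) (x t) :=
    hgradF.hasGradientAt
  have hgradeq := hgrad.gradient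
  have hinner : (inner ℝ (x' t) (gradient (φ t) (x t)) : ℝ) = L (0, x' t) := by
    rw [hgradeq, real_inner_comm]
    rw [InnerProductSpace.toDual_symm_apply]
    simp
  -- value of g at t is 0, by continuity and accumulation
  have hgt : φ t (x t) = 0 := by
    have t1 : Tendsto (fun s => φ s (x s)) (𝓝[N \ {t}] t) (𝓝 (φ t (x t))) :=
      (hc.continuousAt.tendsto).comp
        (nhdsWithin_le_nhds.trans_eq rfl)
    have t2 : Tendsto (fun s => φ s (x s)) (𝓝[N \ {t}] t) (𝓝 0) := by
      apply tendsto_const_nhds.congr'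
      filter_upwards [self_mem_nhdsWithin] with u hu
      exact (hu.1.2).symm
    exact tendsto_nhds_unique t1 t2
  -- the derivative of g vanishes
  have hc0 : L (1, x' t) = 0 :=
    aux_deriv_zero hclus hc (fun u hu => hu.2) hgt
  rw [hpart.deriv, hinner, ← map_add]
  have : ((1 : ℝ), (0 : EuclideanSpace ℝ (Fin n))) + ((0 : ℝ), x' t) = (1, x' t) := by
    simp [Prod.ext_iff]
  rw [this, hc0]
end
end

section
/- Let J=(a,b)⊆ℝ, Ω⊆ℝⁿ open, and let φ: J×Ω→ℝ be of class C¹ with ∇ₓφ of class C¹ on J×Ω and non-vanishing on M={(t,x)∈J×Ω: φ(t,x)=0}. Set Σ(t)={x∈Ω: φ(t,x)=0}, n_Σ=∇ₓφ/‖∇ₓφ‖ and V_Σ=−∂ₜφ/‖∇ₓφ‖ on M. Let v⁺ be defined and continuous on {(t,x)∈J×Ω: φ(t,x)≥0}, v⁻ on {(t,x)∈J×Ω: φ(t,x)≤0}, with values in ℝⁿ, and let ρ⁺, ρ⁻ be functions on the same respective sets with values in (0,∞). Assume on M: (i) v⁺−⟨v⁺,n_Σ⟩n_Σ = v⁻−⟨v⁻,n_Σ⟩n_Σ,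 and (ii) ρ⁺(⟨v⁺,n_Σ⟩−V_Σ) = ρ⁻(⟨v⁻,n_Σ⟩−V_Σ). Let x: I→Ω be absolutely continuous on an interval I⊆J and suppose that for almost every t∈I: ẋ(t)=v⁺(t,x(t)) if φ(t,x(t))>0, ẋ(t)=v⁻(t,x(t)) if φ(t,x(t))<0, and ẋ(t)∈{(1−λ)v⁺(t,x(t))+λv⁻(t,x(t)): λ∈[0,1]} if φ(t,x(t))=0. Then: (a) for almost every t with φ(t,x(t))=0 one has ⟨v⁺(t,x(t)),n_Σ(t,x(t))⟩ = V_Σ(t,x(t)) = ⟨v⁻(t,x(t)),n_Σ(t,x(t))⟩ and hence v⁺(t,x(t))=v⁻(t,x(t)); (b) the set {t∈I: φ(t,x(t))=0 and v⁺(t,x(t))≠v⁻(t,x(t))} has Lebesgue measure zero, so that x solves the single-valued ODE ẋ(t)=v^±(t,x(t)) almost everywhere according to the sign of φ(t,x(t)). -/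
open MeasureTheory Set Metric

noncomputable section

open Filter in
lemma ae_acc_restrict (W : Set ℝ) : ∀ᵐ t ∂(volume.restrict W), (nhdsWithin t (W \ {t})).NeBot := by
  filter_upwards [Besicovitch.ae_tendsto_measure_inter_div volume W] with t ht
  by_contra hbot
  rw [Filter.not_neBot] at hbot
  have hcl : t ∉ closure (W \ {t}) := by
    rw [mem_closure_iff_nhdsWithin_neBot, hbot]
    exact fun h => h.ne rfl
  rw [Metric.mem_closure_iff] at hcl
  push_neg at hcl
  obtain ⟨ε, hε, hfar⟩ := hcl
  have hev : ∀ᶠ r in nhdsWithin (0:ℝ) (Ioi 0),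
      volume (W ∩ closedBall t r) / volume (closedBall t r) = 0 := by
    filter_upwards [Ioo_mem_nhdsGT_of_mem
      (⟨le_rfl, half_pos hε⟩ : (0:ℝ) ∈ Ico 0 (ε/2))] with r hr
    have hsub : W ∩ closedBall t r ⊆ {t} := by
      intro y hy
      by_contra hy'
      have := hfar y ⟨hy.1, hy'⟩
      have hd : dist t y ≤ r := by rw [dist_comm]; exact hy.2
      linarith [hr.2]
    have h0 : volume (W ∩ closedBall t r) = 0 :=
      le_antisymm (le_trans (measure_mono hsub) (by simp)) zero_le
    rw [h0, ENNReal.zero_div]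
  have h2 : Filter.Tendsto (fun r => volume (W ∩ closedBall t r) / volume (closedBall t r))
      (nhdsWithin (0:ℝ) (Ioi 0)) (nhds 0) := by
    refine Filter.Tendsto.congr' ?_ tendsto_const_nhds
    filter_upwards [hev] with r hr using hr.symm
  exact one_ne_zero (tendsto_nhds_unique ht h2)
/-- The unit normal field `n_Σ = ∇ₓφ / ‖∇ₓφ‖` of the level-set family of `φ`. -/
def nvec {n : ℕ} (φ : ℝ → EuclideanSpace ℝ (Fin n) → ℝ) (t : ℝ)
    (x : EuclideanSpace ℝ (Fin n)) : EuclideanSpace ℝ (Fin n) :=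
  ‖gradient (φ t) x‖⁻¹ • gradient (φ t) x

/-- The speed of normal displacement `V_Σ = -∂ₜφ / ‖∇ₓφ‖` of the level-set family of `φ`. -/
def Vspeed {n : ℕ} (φ : ℝ → EuclideanSpace ℝ (Fin n) → ℝ) (t : ℝ)
    (x : EuclideanSpace ℝ (Fin n)) : ℝ :=
  -(deriv (fun s => φ s x) t) / ‖gradient (φ t) x‖

set_option maxHeartbeats 2000000 in
/-- Any Krasovskii (convexified) solution of the two-phase ODE moves with the interface
normal speed while on the interface, and is in fact a solution of the single-valued ODE. -/
theorem krasovskii_solutions_solve_single_valued_ODE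
    {n : ℕ} (a b : ℝ) (Ω : Set (EuclideanSpace ℝ (Fin n))) (hΩ : IsOpen Ω)
    (φ : ℝ → EuclideanSpace ℝ (Fin n) → ℝ)
    (vp vm : ℝ → EuclideanSpace ℝ (Fin n) → EuclideanSpace ℝ (Fin n))
    (rhop rhom : ℝ → EuclideanSpace ℝ (Fin n) → ℝ)
    (J : Set ℝ) (hJ : J = Ioo a b)
    (M Sp Sm : Set (ℝ × EuclideanSpace ℝ (Fin n)))
    (hM : M = {p ∈ J ×ˢ Ω | φ p.1 p.2 = 0})
    (hSp : Sp = {p ∈ J ×ˢ Ω | 0 ≤ φ p.1 p.2})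
    (hSm : Sm = {p ∈ J ×ˢ Ω | φ p.1 p.2 ≤ 0})
    -- `φ` is of class `C¹` on `J × Ω` with `C¹` and nonvanishing spatial gradient
    (hφC1 : ContDiffOn ℝ 1 (fun p : ℝ × EuclideanSpace ℝ (Fin n) => φ p.1 p.2) (J ×ˢ Ω))
    (hgradC1 : ContDiffOn ℝ 1
      (fun p : ℝ × EuclideanSpace ℝ (Fin n) => gradient (φ p.1) p.2) (J ×ˢ Ω))
    (hgrad0 : ∀ p ∈ M, gradient (φ p.1) p.2 ≠ 0)
    -- continuity of the one-sided velocity fields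
    (hvpc : ContinuousOn (fun p : ℝ × EuclideanSpace ℝ (Fin n) => vp p.1 p.2) Sp)
    (hvmc : ContinuousOn (fun p : ℝ × EuclideanSpace ℝ (Fin n) => vm p.1 p.2) Sm)
    -- positivity of the one-sided densities
    (hrhop : ∀ p ∈ Sp, 0 < rhop p.1 p.2) (hrhom : ∀ p ∈ Sm, 0 < rhom p.1 p.2)
    -- (i) equal tangential parts on M
    (htan : ∀ p ∈ M,
      vp p.1 p.2 - (inner ℝ (vp p.1 p.2) (nvec φ p.1 p.2) : ℝ) • nvec φ p.1 p.2
        = vm p.1 p.2 - (inner ℝ (vm p.1 p.2) (nvec φ p.1 p.2) : ℝ) • nvec φ p.1 p.2)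
    -- (ii) transmission condition on M
    (htrans : ∀ p ∈ M,
      rhop p.1 p.2 * ((inner ℝ (vp p.1 p.2) (nvec φ p.1 p.2) : ℝ) - Vspeed φ p.1 p.2)
        = rhom p.1 p.2 * ((inner ℝ (vm p.1 p.2) (nvec φ p.1 p.2) : ℝ) - Vspeed φ p.1 p.2))
    -- `x` is an a.c. solution of the Krasovskii differential inclusion on `I ⊆ J`
    (I : Set ℝ) (hI : I ⊆ J) (hIint : I.OrdConnected)
    (x : ℝ → EuclideanSpace ℝ (Fin n)) (hxΩ : ∀ t ∈ I, x t ∈ Ω)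
    (hxac : AbsContOn x I)
    (hxsol : ∀ᵐ t ∂(volume.restrict I),
      (0 < φ t (x t) → HasDerivAt x (vp t (x t)) t) ∧
      (φ t (x t) < 0 → HasDerivAt x (vm t (x t)) t) ∧
      (φ t (x t) = 0 → ∃ l ∈ Icc (0:ℝ) 1,
        HasDerivAt x ((1 - l) • vp t (x t) + l • vm t (x t)) t)) :
    -- (a) a.e. on the contact set, the one-sided normal speeds agree with `V_Σ`
    (∀ᵐ t ∂(volume.restrict {t ∈ I | φ t (x t) = 0}),
      (inner ℝ (vp t (x t)) (nvec φ t (x t)) : ℝ) = Vspeed φ t (x t) ∧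
      (inner ℝ (vm t (x t)) (nvec φ t (x t)) : ℝ) = Vspeed φ t (x t) ∧
      vp t (x t) = vm t (x t)) ∧
    -- (b) the multivalued set is null and `x` solves the single-valued ODE
    volume {t ∈ I | φ t (x t) = 0 ∧ vp t (x t) ≠ vm t (x t)} = 0 ∧
    (∀ᵐ t ∂(volume.restrict I),
      (0 ≤ φ t (x t) → HasDerivAt x (vp t (x t)) t) ∧
      (φ t (x t) ≤ 0 → HasDerivAt x (vm t (x t)) t)) := by

  subst hJ hM hSp hSm
  have hJo : IsOpen (Ioo a b ×ˢ Ω) := isOpen_Ioo.prod hΩ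
  have hImeas : MeasurableSet I := hIint.measurableSet
  set P0 : ℝ → Prop := fun t =>
      (0 < φ t (x t) → HasDerivAt x (vp t (x t)) t) ∧
      (φ t (x t) < 0 → HasDerivAt x (vm t (x t)) t) ∧
      (φ t (x t) = 0 → ∃ l ∈ Icc (0:ℝ) 1,
        HasDerivAt x ((1 - l) • vp t (x t) + l • vm t (x t)) t) with hP0
  have hxsol' : ∀ᵐ t ∂(volume.restrict I), P0 t := hxsol
  have h1 : volume ({t | ¬ P0 t} ∩ I) = 0 := by
    have := ae_iff.1 hxsol'
    rwa [Measure.restrict_apply' hImeas] at this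
  set N := toMeasurable volume ({t | ¬ P0 t} ∩ I) with hNdef
  have hNmeas : MeasurableSet N := measurableSet_toMeasurable _ _
  have hNnull : volume N = 0 := by rw [hNdef, measure_toMeasurable]; exact h1
  have hNsub : {t | ¬ P0 t} ∩ I ⊆ N := subset_toMeasurable _ _
  set S := I \ N with hSdef
  have hSmeas : MeasurableSet S := hImeas.diff hNmeas
  have hSsol : ∀ t ∈ S, P0 t := by
    intro t ht
    by_contra h
    exact ht.2 (hNsub ⟨h, ht.1⟩)
  have hSderiv : ∀ t ∈ S, ∃ v, HasDerivAt x v t := by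
    intro t ht
    rcases lt_trichotomy (φ t (x t)) 0 with h | h | h
    · exact ⟨_, (hSsol t ht).2.1 h⟩
    · obtain ⟨l, -, hd⟩ := (hSsol t ht).2.2 h
      exact ⟨_, hd⟩
    · exact ⟨_, (hSsol t ht).1 h⟩
  have hgcont : ∀ t ∈ S, ContinuousAt (fun s => φ s (x s)) t := by
    intro t ht
    obtain ⟨v, hv⟩ := hSderiv t ht
    have hp : (t, x t) ∈ Ioo a b ×ˢ Ω := ⟨hI ht.1, hxΩ t ht.1⟩
    have hFc : ContinuousAt (fun p : ℝ × EuclideanSpace ℝ (Fin n) => φ p.1 p.2) (t, x t) :=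
      (hφC1.continuousOn (t, x t) hp).continuousAt (hJo.mem_nhds hp)
    have hcur : ContinuousAt (fun s : ℝ => (s, x s)) t := continuousAt_id.prodMk hv.continuousAt
    exact ContinuousAt.comp (f := fun s : ℝ => (s, x s)) hFc hcur
  set W := S ∩ (fun s => φ s (x s)) ⁻¹' {0} with hWdef
  have hWeq : W = S ∩ closure W := by
    apply Subset.antisymm
    · exact subset_inter inter_subset_left subset_closure
    · rintro t ⟨htS, htc⟩
      have h0 : (fun s => φ s (x s)) t ∈ closure ((fun s => φ s (x s)) '' W) :=
        ((hgcont t htS).continuousWithinAt).mem_closure_image htc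
      have himg : (fun s => φ s (x s)) '' W ⊆ {0} := by
        rintro - ⟨s, hs, rfl⟩
        exact hs.2
      exact ⟨htS, (closure_minimal himg isClosed_singleton) h0⟩
  have hWmeas : MeasurableSet W := by
    rw [hWeq]; exact hSmeas.inter isClosed_closure.measurableSet
  set N2 := {t | ¬ (nhdsWithin t (W \ {t})).NeBot} ∩ W with hN2def
  have hN2null : volume N2 = 0 := by
    have := ae_iff.1 (ae_acc_restrict W)
    rwa [Measure.restrict_apply' hWmeas] at this
  have key : ∀ t ∈ W, (nhdsWithin t (W \ {t})).NeBot →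
      ((inner ℝ (vp t (x t)) (nvec φ t (x t)) : ℝ) = Vspeed φ t (x t) ∧
       (inner ℝ (vm t (x t)) (nvec φ t (x t)) : ℝ) = Vspeed φ t (x t) ∧
       vp t (x t) = vm t (x t)) := by
    intro t htW hacc
    have htS : t ∈ S := htW.1
    have htgz : φ t (x t) = 0 := htW.2
    have hp : (t, x t) ∈ Ioo a b ×ˢ Ω := ⟨hI htS.1, hxΩ t htS.1⟩
    obtain ⟨l, hl, hder⟩ := (hSsol t htS).2.2 htgz
    set w := (1 - l) • vp t (x t) + l • vm t (x t) with hwdef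
    have hFd : DifferentiableAt ℝ (fun p : ℝ × EuclideanSpace ℝ (Fin n) => φ p.1 p.2) (t, x t) :=
      ((hφC1.differentiableOn one_ne_zero) (t, x t) hp).differentiableAt (hJo.mem_nhds hp)
    set L := fderiv ℝ (fun p : ℝ × EuclideanSpace ℝ (Fin n) => φ p.1 p.2) (t, x t) with hL
    have hγ : HasDerivAt (fun s : ℝ => (s, x s)) ((1:ℝ), w) t := (hasDerivAt_id t).prodMk hder
    have hgd : HasDerivAt (fun s => φ s (x s)) (L (1, w)) t :=
      by have := hFd.hasFDerivAt.comp_hasDerivAt t hγ; exact this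
    have hzero : L (1, w) = 0 := by
      haveI := hacc
      have h1 : Filter.Tendsto (slope (fun s => φ s (x s)) t) (nhdsWithin t (W \ {t}))
          (nhds (L (1, w))) :=
        hasDerivWithinAt_iff_tendsto_slope.1 (hgd.hasDerivWithinAt (s := W))
      have h2 : Filter.Tendsto (slope (fun s => φ s (x s)) t) (nhdsWithin t (W \ {t}))
          (nhds 0) := by
        refine Filter.Tendsto.congr' ?_ tendsto_const_nhds
        filter_upwards [self_mem_nhdsWithin] with s hs
        have hgs : φ s (x s) = 0 := hs.1.2
        simp [slope, hgs, htgz]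
      exact tendsto_nhds_unique h1 h2
    have hct : HasDerivAt (fun s : ℝ => (s, x t)) ((1:ℝ), (0:EuclideanSpace ℝ (Fin n))) t :=
      (hasDerivAt_id t).prodMk (hasDerivAt_const t (x t))
    have hpt : HasDerivAt (fun s => φ s (x t)) (L (1, 0)) t :=
      by have := hFd.hasFDerivAt.comp_hasDerivAt t hct; exact this
    have hDt : deriv (fun s => φ s (x t)) t = L (1, 0) := hpt.deriv
    have hφtd : HasFDerivAt (φ t)
        (L.comp (ContinuousLinearMap.inr ℝ ℝ (EuclideanSpace ℝ (Fin n)))) (x t) :=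
      hFd.hasFDerivAt.comp (x t) (hasFDerivAt_prodMk_right t (x t))
    have hge : gradient (φ t) (x t)
        = (InnerProductSpace.toDual ℝ (EuclideanSpace ℝ (Fin n))).symm
            (L.comp (ContinuousLinearMap.inr ℝ ℝ (EuclideanSpace ℝ (Fin n)))) :=
      (hasFDerivAt_iff_hasGradientAt.mp hφtd).gradient
    have hgr : ∀ v, (inner ℝ (gradient (φ t) (x t)) v : ℝ) = L (0, v) := by
      intro v
      rw [hge, InnerProductSpace.toDual_symm_apply]
      rfl
    have e : L ((1:ℝ), w) = L (1, 0) + L (0, w) := by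
      rw [← map_add]
      norm_num
    have hsum0 : deriv (fun s => φ s (x t)) t + (inner ℝ (gradient (φ t) (x t)) w : ℝ) = 0 := by
      rw [hDt, hgr w, ← e]
      exact hzero
    have hw : (inner ℝ (gradient (φ t) (x t)) w : ℝ)
        = (1 - l) * (inner ℝ (gradient (φ t) (x t)) (vp t (x t)) : ℝ)
          + l * (inner ℝ (gradient (φ t) (x t)) (vm t (x t)) : ℝ) := by
      rw [hwdef, inner_add_right, real_inner_smul_right, real_inner_smul_right]
    rw [hw] at hsum0
    have hG0 : gradient (φ t) (x t) ≠ 0 := hgrad0 (t, x t) ⟨hp, htgz⟩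
    have hrpos : (0:ℝ) < ‖gradient (φ t) (x t)‖ := norm_pos_iff.2 hG0
    have hr0 : ‖gradient (φ t) (x t)‖ ≠ 0 := hrpos.ne'
    have hipp : (inner ℝ (vp t (x t)) (nvec φ t (x t)) : ℝ)
        = (inner ℝ (gradient (φ t) (x t)) (vp t (x t)) : ℝ) / ‖gradient (φ t) (x t)‖ := by
      simp only [nvec, real_inner_smul_right, div_eq_inv_mul]
      rw [real_inner_comm]
    have hipm : (inner ℝ (vm t (x t)) (nvec φ t (x t)) : ℝ)
        = (inner ℝ (gradient (φ t) (x t)) (vm t (x t)) : ℝ) / ‖gradient (φ t) (x t)‖ := by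
      simp only [nvec, real_inner_smul_right, div_eq_inv_mul]
      rw [real_inner_comm]
    have hVs : Vspeed φ t (x t)
        = -(deriv (fun s => φ s (x t)) t) / ‖gradient (φ t) (x t)‖ := rfl
    have htr := htrans (t, x t) ⟨hp, htgz⟩
    have hρp : 0 < rhop t (x t) := hrhop (t, x t) ⟨hp, htgz.ge⟩
    have hρm : 0 < rhom t (x t) := hrhom (t, x t) ⟨hp, htgz.le⟩
    rw [hipp, hipm, hVs] at htr
    set R := ‖gradient (φ t) (x t)‖ with hR
    set A := (inner ℝ (gradient (φ t) (x t)) (vp t (x t)) : ℝ) with hA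
    set B := (inner ℝ (gradient (φ t) (x t)) (vm t (x t)) : ℝ) with hB
    set D := deriv (fun s => φ s (x t)) t with hD
    have e1 : rhop t (x t) * (A + D) = rhom t (x t) * (B + D) := by
      have hstep : ∀ C E : ℝ, C / R - -E / R = (C + E) * R⁻¹ := by intro C E; ring
      rw [hstep, hstep, ← mul_assoc, ← mul_assoc] at htr
      exact mul_right_cancel₀ (inv_ne_zero hr0) htr
    have hC : 0 < (1 - l) * rhom t (x t) + l * rhop t (x t) := by
      rcases le_total (rhom t (x t)) (rhop t (x t)) with h | h
      · nlinarith [hl.1, hl.2]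
      · nlinarith [hl.1, hl.2]
    have h0 : ((1 - l) * rhom t (x t) + l * rhop t (x t)) * (A + D) = 0 := by
      linear_combination rhom t (x t) * hsum0 + l * e1
    have hαz : A + D = 0 := by
      rcases mul_eq_zero.1 h0 with h | h
      · exact absurd h hC.ne'
      · exact h
    have hβz : B + D = 0 := by
      have h2 : rhom t (x t) * (B + D) = 0 := by rw [← e1, hαz, mul_zero]
      rcases mul_eq_zero.1 h2 with h | h
      · exact absurd h hρm.ne'
      · exact h
    have c1 : (inner ℝ (vp t (x t)) (nvec φ t (x t)) : ℝ) = Vspeed φ t (x t) := by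
      rw [hipp, hVs]
      have : A = -D := by linarith
      rw [this]
    have c2 : (inner ℝ (vm t (x t)) (nvec φ t (x t)) : ℝ) = Vspeed φ t (x t) := by
      rw [hipm, hVs]
      have : B = -D := by linarith
      rw [this]
    have c3 : vp t (x t) = vm t (x t) := by
      have h := htan (t, x t) ⟨hp, htgz⟩
      rw [c1, c2] at h
      exact sub_left_inj.mp h
    exact ⟨c1, c2, c3⟩
  have hWZ : W ⊆ {s ∈ I | φ s (x s) = 0} := fun t ht => ⟨ht.1.1, ht.2⟩
  have hZW : ∀ t, t ∈ {s ∈ I | φ s (x s) = 0} → t ∉ N → t ∈ W :=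
    fun t ht htN => ⟨⟨ht.1, htN⟩, ht.2⟩
  have hZnull : NullMeasurableSet {s ∈ I | φ s (x s) = 0} volume := by
    have hsub2 : {s ∈ I | φ s (x s) = 0} \ W ⊆ N := by
      intro t ht
      by_contra h
      exact ht.2 (hZW t ht.1 h)
    have heq : {s ∈ I | φ s (x s) = 0} = W ∪ ({s ∈ I | φ s (x s) = 0} \ W) :=
      (union_diff_cancel hWZ).symm
    rw [heq]
    exact hWmeas.nullMeasurableSet.union
      (NullMeasurableSet.of_null (measure_mono_null hsub2 hNnull))
  have hnN : ∀ᵐ t ∂(volume : Measure ℝ), t ∉ N := measure_eq_zero_iff_ae_notMem.1 hNnull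
  have hnN2 : ∀ᵐ t ∂(volume : Measure ℝ), t ∉ N2 := measure_eq_zero_iff_ae_notMem.1 hN2null
  refine ⟨?_, ?_, ?_⟩
  · filter_upwards [ae_restrict_mem₀ hZnull, ae_restrict_of_ae hnN, ae_restrict_of_ae hnN2]
      with t htZ htN htN2
    have htW : t ∈ W := hZW t htZ htN
    have hacc : (nhdsWithin t (W \ {t})).NeBot := by
      by_contra h
      exact htN2 ⟨h, htW⟩
    exact key t htW hacc
  · refine measure_mono_null ?_ (measure_union_null hNnull hN2null)
    intro t ht
    by_contra h
    rw [mem_union] at h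
    push_neg at h
    have htW : t ∈ W := hZW t ⟨ht.1, ht.2.1⟩ h.1
    have hacc : (nhdsWithin t (W \ {t})).NeBot := by
      by_contra h2
      exact h.2 ⟨h2, htW⟩
    exact ht.2.2 (key t htW hacc).2.2
  · filter_upwards [hxsol', ae_restrict_of_ae hnN, ae_restrict_of_ae hnN2,
      ae_restrict_mem hImeas] with t hsolt htN htN2 htI
    have hcase : φ t (x t) = 0 →
        HasDerivAt x (vp t (x t)) t ∧ HasDerivAt x (vm t (x t)) t := by
      intro h0
      have htW : t ∈ W := ⟨⟨htI, htN⟩, h0⟩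
      have hacc : (nhdsWithin t (W \ {t})).NeBot := by
        by_contra h
        exact htN2 ⟨h, htW⟩
      obtain ⟨-, -, hpm⟩ := key t htW hacc
      obtain ⟨l, hl, hd⟩ := hsolt.2.2 h0
      have hcomb : (1 - l) • vp t (x t) + l • vm t (x t) = vp t (x t) := by
        rw [← hpm, ← add_smul]
        norm_num
      refine ⟨hcomb ▸ hd, ?_⟩
      rw [← hpm]
      exact hcomb ▸ hd
    constructor
    · intro h0
      rcases h0.lt_or_eq with h | h
      · exact hsolt.1 h
      · exact (hcase h.symm).1
    · intro h0
      rcases h0.lt_or_eq with h | h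
      · exact hsolt.2.1 h
      · exact (hcase h).2
end
end

section
/- Let v⁺: {x∈ℝⁿ: xₙ≥0}→ℝⁿ and v⁻: {x∈ℝⁿ: xₙ≤0}→ℝⁿ be continuous, and define v: ℝⁿ→ℝⁿ by v(x)=v⁺(x) if xₙ≥0 and v(x)=v⁻(x) if xₙ<0. For x∈ℝⁿ define F(x) = ⋂_{δ>0} closure(convexHull(v(B_δ(x)))), where B_δ(x) is the open ball of radius δ around x. Then F(x)={v⁺(x)} if xₙ>0, F(x)={v⁻(x)} if xₙ<0, and F(x)={(1−λ)v⁺(x)+λv⁻(x): λ∈[0,1]} if xₙ=0. -/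
open Set Metric Pointwise

noncomputable section

/-- The Krasovskii (multivalued) regularization of the discontinuous two-phase
velocity field: away from the hyperplane `{xₙ = 0}` it is single-valued, and on
the hyperplane it is the segment joining the two one-sided values. -/
theorem krasovskii_regularization_two_phase
    {n : ℕ} (hn : 0 < n) (lst : Fin n) (hlst : (lst : ℕ) = n - 1)
    (vp vm : EuclideanSpace ℝ (Fin n) → EuclideanSpace ℝ (Fin n))
    (hvp : ContinuousOn vp {x : EuclideanSpace ℝ (Fin n) | 0 ≤ x lst})
    (hvm : ContinuousOn vm {x : EuclideanSpace ℝ (Fin n) | x lst ≤ 0})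
    (v : EuclideanSpace ℝ (Fin n) → EuclideanSpace ℝ (Fin n))
    (hv : ∀ x, v x = if 0 ≤ x lst then vp x else vm x)
    (F : EuclideanSpace ℝ (Fin n) → Set (EuclideanSpace ℝ (Fin n)))
    (hF : ∀ x, F x = ⋂ δ > (0:ℝ), closure (convexHull ℝ (v '' ball x δ))) :
    ∀ x : EuclideanSpace ℝ (Fin n),
      (0 < x lst → F x = {vp x}) ∧
      (x lst < 0 → F x = {vm x}) ∧
      (x lst = 0 → F x = segment ℝ (vp x) (vm x)) := by
  -- the coordinate projection is 1-Lipschitz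
  have coord : ∀ y z : EuclideanSpace ℝ (Fin n), dist (y lst) (z lst) ≤ dist y z := by
    intro y z
    rw [EuclideanSpace.dist_eq]
    have h1 : dist (y lst) (z lst) ^ 2 ≤ ∑ i, dist (y i) (z i) ^ 2 :=
      Finset.single_le_sum (f := fun i => dist (y i) (z i) ^ 2)
        (fun i _ => sq_nonneg _) (Finset.mem_univ lst)
    calc dist (y lst) (z lst) = Real.sqrt (dist (y lst) (z lst) ^ 2) :=
          (Real.sqrt_sq dist_nonneg).symm
      _ ≤ _ := Real.sqrt_le_sqrt h1
  intro x
  -- general lemma for the single-valued case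
  have key : ∀ c : EuclideanSpace ℝ (Fin n), v x = c →
      (∀ ε > (0:ℝ), ∃ δ > (0:ℝ), v '' ball x δ ⊆ closedBall c ε) → F x = {c} := by
    intro c hc hsmall
    rw [hF]
    apply Subset.antisymm
    · intro z hz
      simp only [mem_iInter] at hz
      have hd : ∀ ε > (0:ℝ), dist z c ≤ ε := by
        intro ε hε
        obtain ⟨δ, hδ, hsub⟩ := hsmall ε hε
        have hsub2 : closure (convexHull ℝ (v '' ball x δ)) ⊆ closedBall c ε :=
          closure_minimal (convexHull_min hsub (convex_closedBall c ε)) isClosed_closedBall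
        exact hsub2 (hz δ hδ)
      have : dist z c ≤ 0 := le_of_forall_pos_le_add (by intro ε hε; simpa using hd ε hε)
      have : dist z c = 0 := le_antisymm this dist_nonneg
      simpa [mem_singleton_iff, ← dist_eq_zero] using this
    · intro z hz
      rw [mem_singleton_iff] at hz
      subst hz
      refine mem_iInter₂.mpr fun δ hδ => subset_closure (subset_convexHull ℝ _ ⟨x, mem_ball_self hδ, hc⟩)
  refine ⟨?_, ?_, ?_⟩
  · -- case 0 < x lst
    intro hx
    have hmem : {y : EuclideanSpace ℝ (Fin n) | 0 ≤ y lst} ∈ nhds x := by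
      have : ∀ y ∈ ball x (x lst), 0 ≤ y lst := by
        intro y hy
        have := coord y x
        rw [Real.dist_eq] at this
        have := abs_lt.mp (lt_of_le_of_lt this (mem_ball.mp hy))
        linarith [this.1]
      exact Filter.mem_of_superset (ball_mem_nhds x hx) this
    have hca : ContinuousAt vp x := hvp.continuousAt hmem
    refine key (vp x) (by rw [hv]; exact if_pos (le_of_lt hx)) ?_
    intro ε hε
    obtain ⟨δ₁, hδ₁, hδ₁'⟩ := Metric.continuousAt_iff.mp hca ε hε
    refine ⟨min δ₁ (x lst), lt_min hδ₁ hx, ?_⟩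
    rintro _ ⟨y, hy, rfl⟩
    rw [mem_ball] at hy
    have hy1 : dist y x < δ₁ := lt_of_lt_of_le hy (min_le_left _ _)
    have hy2 : 0 ≤ y lst := by
      have h := lt_of_le_of_lt (coord y x) (lt_of_lt_of_le hy (min_le_right _ _))
      rw [Real.dist_eq] at h
      have := abs_lt.mp h
      linarith [this.1]
    rw [hv, if_pos hy2]
    exact le_of_lt (hδ₁' hy1)
  · -- case x lst < 0
    intro hx
    have hmem : {y : EuclideanSpace ℝ (Fin n) | y lst ≤ 0} ∈ nhds x := by
      have : ∀ y ∈ ball x (-(x lst)), y lst ≤ 0 := by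
        intro y hy
        have := coord y x
        rw [Real.dist_eq] at this
        have := abs_lt.mp (lt_of_le_of_lt this (mem_ball.mp hy))
        linarith [this.2]
      exact Filter.mem_of_superset (ball_mem_nhds x (by linarith)) this
    have hca : ContinuousAt vm x := hvm.continuousAt hmem
    refine key (vm x) (by rw [hv]; exact if_neg (not_le.mpr hx)) ?_
    intro ε hε
    obtain ⟨δ₁, hδ₁, hδ₁'⟩ := Metric.continuousAt_iff.mp hca ε hε
    refine ⟨min δ₁ (-(x lst)), lt_min hδ₁ (by linarith), ?_⟩
    rintro _ ⟨y, hy, rfl⟩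
    rw [mem_ball] at hy
    have hy1 : dist y x < δ₁ := lt_of_lt_of_le hy (min_le_left _ _)
    have hy2 : y lst < 0 := by
      have h := lt_of_le_of_lt (coord y x) (lt_of_lt_of_le hy (min_le_right _ _))
      rw [Real.dist_eq] at h
      have := abs_lt.mp h
      linarith [this.2]
    rw [hv, if_neg (not_le.mpr hy2)]
    exact le_of_lt (hδ₁' hy1)
  · -- case x lst = 0
    intro hx0
    have hvx : v x = vp x := by rw [hv]; exact if_pos (le_of_eq hx0.symm)
    set e : EuclideanSpace ℝ (Fin n) := EuclideanSpace.single lst (1:ℝ) with he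
    have he_lst : e lst = 1 := by simp [he, EuclideanSpace.single_apply]
    have he_norm : ‖e‖ = 1 := by simp [he, EuclideanSpace.norm_single]
    have hcurve_lst : ∀ t : ℝ, (x - t • e) lst = -t := by
      intro t
      have : (x - t • e) lst = x lst - t * e lst := by
        simp [PiLp.sub_apply, PiLp.smul_apply, smul_eq_mul]
      rw [this, he_lst, hx0]; ring
    have hcurve_dist : ∀ t : ℝ, dist (x - t • e) x = |t| := by
      intro t
      rw [dist_eq_norm]
      have : x - t • e - x = -(t • e) := by abel
      rw [this, norm_neg, norm_smul, he_norm, Real.norm_eq_abs, mul_one]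
    -- vm x is a limit of values of v near x
    have hvm_mem : ∀ δ > (0:ℝ), vm x ∈ closure (v '' ball x δ) := by
      intro δ hδ
      have hxS : x ∈ {y : EuclideanSpace ℝ (Fin n) | y lst ≤ 0} := by simp [hx0]
      have hcw : ContinuousWithinAt vm {y : EuclideanSpace ℝ (Fin n) | y lst ≤ 0} x := hvm x hxS
      have hcurve : Filter.Tendsto (fun t : ℝ => x - t • e) (nhdsWithin 0 (Ioi 0))
          (nhdsWithin x {y : EuclideanSpace ℝ (Fin n) | y lst ≤ 0}) := by
        rw [tendsto_nhdsWithin_iff]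
        constructor
        · have hcont : Continuous (fun t : ℝ => x - t • e) :=
            continuous_const.sub (continuous_id.smul continuous_const)
          have := hcont.tendsto 0
          simp only [zero_smul, sub_zero] at this
          exact this.mono_left nhdsWithin_le_nhds
        · filter_upwards [self_mem_nhdsWithin] with t ht
          simp only [mem_setOf_eq, hcurve_lst]
          exact le_of_lt (neg_neg_iff_pos.mpr ht)
      have htend : Filter.Tendsto (fun t : ℝ => vm (x - t • e)) (nhdsWithin 0 (Ioi 0))
          (nhds (vm x)) := hcw.tendsto.comp hcurve
      have hmem : ∀ᶠ t in nhdsWithin (0:ℝ) (Ioi 0), vm (x - t • e) ∈ v '' ball x δ := by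
        filter_upwards [Ioo_mem_nhdsGT_of_mem (by constructor <;> [exact le_refl (0:ℝ); exact hδ])]
          with t ht
        refine ⟨x - t • e, ?_, ?_⟩
        · rw [mem_ball, hcurve_dist, abs_of_pos ht.1]; exact ht.2
        · rw [hv, if_neg]
          rw [hcurve_lst]
          exact not_le.mpr (by linarith [ht.1])
      exact mem_closure_of_tendsto htend hmem
    rw [hF]
    apply Subset.antisymm
    · -- F x ⊆ segment
      intro z hz
      simp only [mem_iInter] at hz
      have hseg_closed : IsClosed (segment ℝ (vp x) (vm x)) := by
        rw [segment_eq_image]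
        exact (isCompact_Icc.image
          (((continuous_const.sub continuous_id).smul continuous_const).add
            (continuous_id.smul continuous_const))).isClosed
      have hinf : ∀ ε > (0:ℝ), infDist z (segment ℝ (vp x) (vm x)) ≤ ε := by
        intro ε hε
        have hxP : x ∈ {y : EuclideanSpace ℝ (Fin n) | 0 ≤ y lst} := by simp [hx0]
        have hxM : x ∈ {y : EuclideanSpace ℝ (Fin n) | y lst ≤ 0} := by simp [hx0]
        obtain ⟨δ₁, hδ₁, hδ₁'⟩ := Metric.continuousWithinAt_iff.mp (hvp x hxP) ε hε
        obtain ⟨δ₂, hδ₂, hδ₂'⟩ := Metric.continuousWithinAt_iff.mp (hvm x hxM) ε hε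
        set δ := min δ₁ δ₂ with hδdef
        have hδ : (0:ℝ) < δ := lt_min hδ₁ hδ₂
        have himg : v '' ball x δ ⊆ segment ℝ (vp x) (vm x) + closedBall (0 : EuclideanSpace ℝ (Fin n)) ε := by
          rintro _ ⟨y, hy, rfl⟩
          rw [mem_ball] at hy
          by_cases hy0 : 0 ≤ y lst
          · have hyd : dist y x < δ₁ := lt_of_lt_of_le hy (min_le_left _ _)
            have hclose : dist (vp y) (vp x) < ε := hδ₁' hy0 hyd
            have : v y = vp x + (vp y - vp x) := by rw [hv, if_pos hy0]; abel
            rw [this]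
            exact Set.add_mem_add (left_mem_segment ℝ _ _)
              (by rw [mem_closedBall_zero_iff, ← dist_eq_norm]; exact le_of_lt hclose)
          · have hy0' : y lst ≤ 0 := le_of_lt (not_le.mp hy0)
            have hyd : dist y x < δ₂ := lt_of_lt_of_le hy (min_le_right _ _)
            have hclose : dist (vm y) (vm x) < ε := hδ₂' hy0' hyd
            have : v y = vm x + (vm y - vm x) := by rw [hv, if_neg hy0]; abel
            rw [this]
            exact Set.add_mem_add (right_mem_segment ℝ _ _)
              (by rw [mem_closedBall_zero_iff, ← dist_eq_norm]; exact le_of_lt hclose)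
        have hsumconv : Convex ℝ (segment ℝ (vp x) (vm x) + closedBall (0 : EuclideanSpace ℝ (Fin n)) ε) :=
          (convex_segment _ _).add (convex_closedBall _ _)
        set T := {w : EuclideanSpace ℝ (Fin n) | infDist w (segment ℝ (vp x) (vm x)) ≤ ε} with hT
        have hTclosed : IsClosed T :=
          isClosed_le (continuous_infDist_pt _) continuous_const
        have hsumT : segment ℝ (vp x) (vm x) + closedBall (0 : EuclideanSpace ℝ (Fin n)) ε ⊆ T := by
          rintro _ ⟨s, hs, c, hc, rfl⟩
          have h1 : infDist (s + c) (segment ℝ (vp x) (vm x)) ≤ dist (s + c) s :=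
            infDist_le_dist_of_mem hs
          have h2 : dist (s + c) s = ‖c‖ := by rw [dist_eq_norm]; congr 1; abel
          rw [mem_closedBall_zero_iff] at hc
          exact le_trans h1 (by rw [h2]; exact hc)
        have hfinal : closure (convexHull ℝ (v '' ball x δ)) ⊆ T :=
          closure_minimal (subset_trans (convexHull_min himg hsumconv) hsumT) hTclosed
        exact hfinal (hz δ hδ)
      have : infDist z (segment ℝ (vp x) (vm x)) = 0 :=
        le_antisymm (le_of_forall_pos_le_add (by intro ε hε; simpa using hinf ε hε)) infDist_nonneg
      have hne : (segment ℝ (vp x) (vm x)).Nonempty := ⟨vp x, left_mem_segment ℝ _ _⟩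
      rw [← hseg_closed.closure_eq]
      exact (mem_closure_iff_infDist_zero hne).mpr this
    · -- segment ⊆ F x
      refine subset_iInter₂ fun δ hδ => ?_
      have hconv : Convex ℝ (closure (convexHull ℝ (v '' ball x δ))) :=
        (convex_convexHull ℝ _).closure
      have ha : vp x ∈ closure (convexHull ℝ (v '' ball x δ)) :=
        subset_closure (subset_convexHull ℝ _ ⟨x, mem_ball_self hδ, hvx⟩)
      have hb : vm x ∈ closure (convexHull ℝ (v '' ball x δ)) :=
        closure_mono (subset_convexHull ℝ _) (hvm_mem δ hδ)
      exact hconv.segment_subset ha hb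
end
end

section
/- Let N⊆ℝ×ℝⁿ be open, φ: N→ℝ of class C¹, and (t₀,x₀)∈N with φ(t₀,x₀)=0 and ∇ₓφ(t₀,x₀)≠0. Set n = ∇ₓφ(t₀,x₀)/‖∇ₓφ(t₀,x₀)‖, V = −∂ₜφ(t₀,x₀)/‖∇ₓφ(t₀,x₀)‖, and for t near t₀ let Σ(t)={x: (t,x)∈N, φ(t,x)=0}. Then lim_{h→0+} h⁻¹ · dist(x₀ + h·V·n, Σ(t₀+h)) = 0, and V is the unique real number c with lim_{h→0+} h⁻¹ · dist(x₀ + h·c·n, Σ(t₀+h)) = 0. -/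
open Set Metric Filter InnerProductSpace
open scoped Topology ENNReal RealInnerProductSpace

noncomputable section
set_option maxHeartbeats 1000000

theorem est_lemma {E : Type*} [NormedAddCommGroup E] [NormedSpace ℝ E]
    (N : Set E) (hN : IsOpen N) (φ : E → ℝ) (z₀ : E) (hz : z₀ ∈ N)
    (D : E →L[ℝ] ℝ) (hD : HasFDerivAt φ D z₀) (h0 : φ z₀ = 0) :
    ∀ ε > (0:ℝ), ∃ δ > (0:ℝ), ∀ p : E, ‖p - z₀‖ < δ →
      p ∈ N ∧ |φ p - D (p - z₀)| ≤ ε * ‖p - z₀‖ := by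
  intro ε hε
  have h1 := hD.isLittleO.def hε
  have h2 : {p : E | p ∈ N ∧ ‖φ p - φ z₀ - D (p - z₀)‖ ≤ ε * ‖p - z₀‖} ∈ 𝓝 z₀ :=
    Filter.inter_mem (hN.mem_nhds hz) h1
  rcases Metric.mem_nhds_iff.1 h2 with ⟨δ, hδ, hball⟩
  refine ⟨δ, hδ, fun p hp => ?_⟩
  have := hball (by simpa [Metric.mem_ball, dist_eq_norm] using hp)
  simpa [h0, Real.norm_eq_abs] using this

theorem ofReal_helper (ε : ℝ≥0∞) (hε : 0 < ε) : ∃ r : ℝ, 0 < r ∧ ENNReal.ofReal r ≤ ε := by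
  rcases eq_or_ne ε ⊤ with rfl | hne
  · exact ⟨1, one_pos, le_top⟩
  · exact ⟨ε.toReal, ENNReal.toReal_pos hε.ne' hne, by rw [ENNReal.ofReal_toReal hne]⟩

/-- The speed of normal displacement of a moving level-set family: `x₀ + h V n` has
distance `o(h)` to `Σ(t₀+h)` as `h → 0+`, and `V` is the unique speed with this property.
Here the distance to the empty set is `+∞` (we use the extended distance `infEdist`). -/
theorem normal_displacement_speed
    {n : ℕ} (N : Set (ℝ × EuclideanSpace ℝ (Fin n))) (hN : IsOpen N)
    (φ : ℝ × EuclideanSpace ℝ (Fin n) → ℝ) (hφ : ContDiffOn ℝ 1 φ N)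
    (t₀ : ℝ) (x₀ : EuclideanSpace ℝ (Fin n)) (hmem : (t₀, x₀) ∈ N)
    (hφ0 : φ (t₀, x₀) = 0)
    (hgrad : gradient (fun y => φ (t₀, y)) x₀ ≠ 0)
    (nv : EuclideanSpace ℝ (Fin n))
    (hnv : nv = ‖gradient (fun y => φ (t₀, y)) x₀‖⁻¹ • gradient (fun y => φ (t₀, y)) x₀)
    (V : ℝ)
    (hV : V = -(deriv (fun s => φ (s, x₀)) t₀) / ‖gradient (fun y => φ (t₀, y)) x₀‖)
    (Sig : ℝ → Set (EuclideanSpace ℝ (Fin n)))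
    (hSig : ∀ t, Sig t = {x | (t, x) ∈ N ∧ φ (t, x) = 0}) :
    Tendsto (fun h : ℝ =>
        EMetric.infEdist (x₀ + (h * V) • nv) (Sig (t₀ + h)) / ENNReal.ofReal h)
      (𝓝[>] 0) (𝓝 0) ∧
    ∀ c : ℝ, Tendsto (fun h : ℝ =>
        EMetric.infEdist (x₀ + (h * c) • nv) (Sig (t₀ + h)) / ENNReal.ofReal h)
      (𝓝[>] 0) (𝓝 0) → c = V := by
  have hφat : ContDiffAt ℝ 1 φ (t₀, x₀) := hφ.contDiffAt (hN.mem_nhds hmem)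
  have hdiff : DifferentiableAt ℝ φ (t₀, x₀) := hφat.differentiableAt one_ne_zero
  set D := fderiv ℝ φ (t₀, x₀) with hDdef
  have hDφ : HasFDerivAt φ D (t₀, x₀) := hdiff.hasFDerivAt
  set G := gradient (fun y => φ (t₀, y)) x₀ with hGdef
  set g := ‖G‖ with hgdef
  have hgpos : 0 < g := norm_pos_iff.2 hgrad
  have hcurve : HasDerivAt (fun s : ℝ => (s, x₀)) ((1:ℝ), (0:EuclideanSpace ℝ (Fin n))) t₀ :=
    (hasDerivAt_id t₀).prodMk (hasDerivAt_const t₀ x₀)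
  have hA : HasDerivAt (fun s => φ (s, x₀)) (D (1, 0)) t₀ := hDφ.comp_hasDerivAt t₀ hcurve
  set A := deriv (fun s => φ (s, x₀)) t₀ with hAdef
  have hAeq : A = D (1, 0) := hA.deriv
  clear_value D G g A
  have hsp0 : HasFDerivAt (fun y : EuclideanSpace ℝ (Fin n) => ((t₀ : ℝ), y))
      (ContinuousLinearMap.inr ℝ ℝ (EuclideanSpace ℝ (Fin n))) x₀ :=
    hasFDerivAt_prodMk_right t₀ x₀
  have hsp : HasFDerivAt (fun y => φ (t₀, y))
      (D.comp (ContinuousLinearMap.inr ℝ ℝ (EuclideanSpace ℝ (Fin n)))) x₀ := hDφ.comp x₀ hsp0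
  have hGr : HasGradientAt (fun y => φ (t₀, y)) G x₀ := by
    rw [hGdef]; exact hsp.differentiableAt.hasGradientAt
  have hEq : (toDual ℝ (EuclideanSpace ℝ (Fin n))) G
      = D.comp (ContinuousLinearMap.inr ℝ ℝ (EuclideanSpace ℝ (Fin n))) :=
    (hasGradientAt_iff_hasFDerivAt.1 hGr).unique hsp
  have hGinner : ∀ v : EuclideanSpace ℝ (Fin n), ⟪G, v⟫ = D (0, v) := by
    intro v
    have := congrArg (fun L : EuclideanSpace ℝ (Fin n) →L[ℝ] ℝ => L v) hEq
    simpa [toDual_apply_apply] using this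
  have hDlin : ∀ (h : ℝ) (v : EuclideanSpace ℝ (Fin n)), D (h, v) = h * A + ⟪G, v⟫ := by
    intro h v
    have h1 : ((h : ℝ), v) = h • ((1:ℝ), (0:EuclideanSpace ℝ (Fin n))) + ((0:ℝ), v) := by
      simp [Prod.ext_iff]
    rw [h1, map_add, map_smul, hGinner, hAeq]
    simp [smul_eq_mul, mul_comm]
  have hnv1 : ‖nv‖ = 1 := by
    rw [hnv, norm_smul, norm_inv, Real.norm_eq_abs, abs_of_pos hgpos, ← hgdef,
      inv_mul_cancel₀ hgpos.ne']
  have hGnv : ⟪G, nv⟫ = g := by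
    rw [hnv, real_inner_smul_right, real_inner_self_eq_norm_mul_norm, ← hgdef]
    field_simp
  have hAVg : A + V * g = 0 := by
    rw [hV]; field_simp; ring
  have key : ∀ ε > (0:ℝ), ∃ δ > (0:ℝ), ∀ p : ℝ × EuclideanSpace ℝ (Fin n),
      ‖p - (t₀, x₀)‖ < δ → p ∈ N ∧ |φ p - D (p - (t₀, x₀))| ≤ ε * ‖p - (t₀, x₀)‖ :=
    est_lemma N hN φ (t₀, x₀) hmem D hDφ hφ0
  have hsub : ∀ (h : ℝ) (v : EuclideanSpace ℝ (Fin n)),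
      ((t₀ + h, x₀ + v) : ℝ × EuclideanSpace ℝ (Fin n)) - (t₀, x₀) = (h, v) := by
    intro h v; simp [Prod.ext_iff]
  have hnormle : ∀ (h : ℝ) (v : EuclideanSpace ℝ (Fin n)),
      ‖((h, v) : ℝ × EuclideanSpace ℝ (Fin n))‖ ≤ |h| + ‖v‖ := by
    intro h v
    rw [Prod.norm_def]
    exact max_le (by simp [Real.norm_eq_abs, norm_nonneg, le_add_of_nonneg_right])
      (le_add_of_nonneg_left (abs_nonneg _))
  -- main estimate
  have main : ∀ c : ℝ, A + c * g = 0 → ∀ r > (0:ℝ), ∀ᶠ h in 𝓝[>] (0:ℝ),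
      EMetric.infEdist (x₀ + (h * c) • nv) (Sig (t₀ + h)) ≤ ENNReal.ofReal (r * h) := by
    intro c hc r hr
    set M := 1 + |c| + r with hM
    have hMpos : 0 < M := by positivity
    have hMne : M ≠ 0 := hMpos.ne'
    set ε₂ := r * g / (2 * M) with hε₂
    have hε₂pos : 0 < ε₂ := by positivity
    obtain ⟨δ, hδpos, hkey⟩ := key ε₂ hε₂pos
    have hδ'pos : 0 < δ / M := by positivity
    filter_upwards [Ioo_mem_nhdsGT_of_mem (Set.mem_Ico.2 ⟨le_refl (0:ℝ), hδ'pos⟩)] with h hh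
    obtain ⟨hhpos, hhlt⟩ := hh
    set a := h * (c - r) with ha
    set b := h * (c + r) with hb
    have hab : a ≤ b := mul_le_mul_of_nonneg_left (by linarith) hhpos.le
    have e1 : h * (-|c|) ≤ h * c := mul_le_mul_of_nonneg_left (neg_abs_le c) hhpos.le
    have e2 : h * c ≤ h * |c| := mul_le_mul_of_nonneg_left (le_abs_self c) hhpos.le
    have hsbound : ∀ s ∈ Icc a b, |s| ≤ h * (|c| + r) := by
      intro s hs
      have h1 : h * (c - r) ≤ s := by rw [← ha]; exact hs.1
      have h2 : s ≤ h * (c + r) := by rw [← hb]; exact hs.2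
      rw [abs_le]
      constructor <;> [linarith [e1, h1]; linarith [e2, h2]]
    have hptnorm : ∀ s ∈ Icc a b,
        ‖((h, s • nv) : ℝ × EuclideanSpace ℝ (Fin n))‖ < δ ∧
        ‖((h, s • nv) : ℝ × EuclideanSpace ℝ (Fin n))‖ ≤ h * M := by
      intro s hs
      have h1 : ‖s • nv‖ = |s| := by rw [norm_smul, hnv1, mul_one, Real.norm_eq_abs]
      have h2 := hnormle h (s • nv)
      rw [h1, abs_of_pos hhpos] at h2
      have h4 := hsbound s hs
      have h5 : ‖((h, s • nv) : ℝ × EuclideanSpace ℝ (Fin n))‖ ≤ h * M := by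
        rw [hM]; linarith [h2, h4]
      refine ⟨lt_of_le_of_lt h5 ?_, h5⟩
      calc h * M < (δ / M) * M := mul_lt_mul_of_pos_right hhlt hMpos
        _ = δ := by field_simp
    have hest : ∀ s ∈ Icc a b,
        (t₀ + h, x₀ + s • nv) ∈ N ∧
        |φ (t₀ + h, x₀ + s • nv) - (h * A + s * g)| ≤ h * (r * g / 2) := by
      intro s hs
      obtain ⟨hlt, hle⟩ := hptnorm s hs
      have hk := hkey (t₀ + h, x₀ + s • nv) (by rw [hsub]; exact hlt)
      rw [hsub] at hk
      refine ⟨hk.1, ?_⟩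
      have hval : D (h, s • nv) = h * A + s * g := by
        rw [hDlin, real_inner_smul_right, hGnv]
      rw [hval] at hk
      calc |φ (t₀ + h, x₀ + s • nv) - (h * A + s * g)|
          ≤ ε₂ * ‖((h, s • nv) : ℝ × EuclideanSpace ℝ (Fin n))‖ := hk.2
        _ ≤ ε₂ * (h * M) := mul_le_mul_of_nonneg_left hle hε₂pos.le
        _ = h * (r * g / 2) := by rw [hε₂]; field_simp
    have hrgpos : 0 ≤ h * (r * g) := by positivity
    have hFa : φ (t₀ + h, x₀ + a • nv) ≤ 0 := by
      have h1 := (hest a ⟨le_refl a, hab⟩).2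
      have h2 : h * A + a * g = -(h * (r * g)) := by rw [ha]; linear_combination h * hc
      rw [abs_le] at h1
      linarith [h1.2, hrgpos]
    have hFb : 0 ≤ φ (t₀ + h, x₀ + b • nv) := by
      have h1 := (hest b ⟨hab, le_refl b⟩).2
      have h2 : h * A + b * g = h * (r * g) := by rw [hb]; linear_combination h * hc
      rw [abs_le] at h1
      linarith [h1.1, hrgpos]
    have hγcont : Continuous fun s : ℝ =>
        ((t₀ + h, x₀ + s • nv) : ℝ × EuclideanSpace ℝ (Fin n)) :=
      continuous_const.prodMk (continuous_const.add (continuous_id.smul continuous_const))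
    have hFcont : ContinuousOn (fun s : ℝ => φ (t₀ + h, x₀ + s • nv)) (Icc a b) :=
      (hφ.continuousOn).comp hγcont.continuousOn (fun s hs => (hest s hs).1)
    have hIVT := intermediate_value_Icc hab hFcont
    have h0mem : (0:ℝ) ∈ Icc (φ (t₀ + h, x₀ + a • nv)) (φ (t₀ + h, x₀ + b • nv)) :=
      Set.mem_Icc.2 ⟨hFa, hFb⟩
    obtain ⟨s₀, hs₀mem, hFs₀⟩ := hIVT h0mem
    have hy : x₀ + s₀ • nv ∈ Sig (t₀ + h) := by
      rw [hSig]
      exact ⟨(hest s₀ hs₀mem).1, hFs₀⟩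
    calc EMetric.infEdist (x₀ + (h * c) • nv) (Sig (t₀ + h))
        ≤ edist (x₀ + (h * c) • nv) (x₀ + s₀ • nv) := EMetric.infEdist_le_edist_of_mem hy
      _ = ENNReal.ofReal (dist (x₀ + (h * c) • nv) (x₀ + s₀ • nv)) := edist_dist _ _
      _ ≤ ENNReal.ofReal (r * h) := by
          apply ENNReal.ofReal_le_ofReal
          rw [dist_eq_norm]
          have heq : x₀ + (h * c) • nv - (x₀ + s₀ • nv) = (h * c - s₀) • nv := by
            rw [sub_smul]; abel
          rw [heq, norm_smul, hnv1, mul_one, Real.norm_eq_abs, abs_le]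
          have h1 : h * (c - r) ≤ s₀ := by rw [← ha]; exact hs₀mem.1
          have h2 : s₀ ≤ h * (c + r) := by rw [← hb]; exact hs₀mem.2
          constructor <;> [linarith [h2]; linarith [h1]]
  -- tendsto for any admissible speed
  have tendsto_of : ∀ c : ℝ, A + c * g = 0 → Tendsto (fun h : ℝ =>
      EMetric.infEdist (x₀ + (h * c) • nv) (Sig (t₀ + h)) / ENNReal.ofReal h)
      (𝓝[>] 0) (𝓝 0) := by
    intro c hc
    rw [ENNReal.tendsto_nhds_zero]
    intro ε hε
    obtain ⟨r, hrpos, hrle⟩ := ofReal_helper ε hε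
    filter_upwards [main c hc r hrpos, self_mem_nhdsWithin] with h h1 h2
    have hhpos : (0:ℝ) < h := h2
    have hne0 : ENNReal.ofReal h ≠ 0 := by simp [ENNReal.ofReal_pos.2 hhpos, ne_of_gt]
    have hnetop : ENNReal.ofReal h ≠ ⊤ := ENNReal.ofReal_ne_top
    calc EMetric.infEdist (x₀ + (h * c) • nv) (Sig (t₀ + h)) / ENNReal.ofReal h
        ≤ ENNReal.ofReal (r * h) / ENNReal.ofReal h := ENNReal.div_le_div_right h1 _
      _ = ENNReal.ofReal r * ENNReal.ofReal h / ENNReal.ofReal h := by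
          rw [ENNReal.ofReal_mul hrpos.le]
      _ = ENNReal.ofReal r := by rw [mul_div_assoc, ENNReal.div_self hne0 hnetop, mul_one]
      _ ≤ ε := hrle
  constructor
  · exact tendsto_of V hAVg
  · intro c hc
    have hzero : A + c * g = 0 := by
      by_contra hne
      have hKpos : 0 < |A + c * g| := abs_pos.2 hne
      have hle : ∀ ε > (0:ℝ), |A + c * g| ≤ ε := by
        intro ε hε
        set ε₃ := ε / (2 * (3 + |c|)) with hε₃
        have hε₃pos : 0 < ε₃ := by positivity
        set r := min 1 (ε / (4 * g)) with hrdef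
        have hrpos : 0 < r := lt_min one_pos (by positivity)
        have hr1 : r ≤ 1 := min_le_left _ _
        have hr2 : r ≤ ε / (4 * g) := min_le_right _ _
        obtain ⟨δ₃, hδ₃pos, hkey₃⟩ := key ε₃ hε₃pos
        set M := 1 + |c| + 2 * r with hM
        have hMpos : 0 < M := by positivity
        have hδ'pos : 0 < δ₃ / M := by positivity
        have hev1 := (ENNReal.tendsto_nhds_zero.1 hc) (ENNReal.ofReal r)
          (ENNReal.ofReal_pos.2 hrpos)
        have hev2 : ∀ᶠ h in 𝓝[>] (0:ℝ), h ∈ Ioo (0:ℝ) (δ₃ / M) :=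
          Ioo_mem_nhdsGT_of_mem (Set.mem_Ico.2 ⟨le_refl (0:ℝ), hδ'pos⟩)
        obtain ⟨h, hh1, hh2⟩ := (hev1.and hev2).exists
        obtain ⟨hhpos, hhlt⟩ := hh2
        have hne0 : ENNReal.ofReal h ≠ 0 := by simp [ENNReal.ofReal_pos.2 hhpos, ne_of_gt]
        have hnetop : ENNReal.ofReal h ≠ ⊤ := ENNReal.ofReal_ne_top
        have hinf : EMetric.infEdist (x₀ + (h * c) • nv) (Sig (t₀ + h))
            ≤ ENNReal.ofReal (r * h) := by
          have h3 := (ENNReal.div_le_iff_le_mul (Or.inl hne0) (Or.inl hnetop)).1 hh1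
          calc EMetric.infEdist (x₀ + (h * c) • nv) (Sig (t₀ + h))
              ≤ ENNReal.ofReal r * ENNReal.ofReal h := h3
            _ = ENNReal.ofReal (r * h) := (ENNReal.ofReal_mul hrpos.le).symm
        have hlt2 : EMetric.infEdist (x₀ + (h * c) • nv) (Sig (t₀ + h))
            < ENNReal.ofReal (2 * r * h) := by
          apply lt_of_le_of_lt hinf
          exact (ENNReal.ofReal_lt_ofReal_iff_of_nonneg (by positivity)).2
            (by linarith [mul_pos hrpos hhpos])
        obtain ⟨y, hySig, hyedist⟩ := EMetric.infEdist_lt_iff.1 hlt2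
        have hydist : dist (x₀ + (h * c) • nv) y < 2 * r * h := by
          rw [edist_dist] at hyedist
          exact (ENNReal.ofReal_lt_ofReal_iff_of_nonneg dist_nonneg).1 hyedist
        rw [hSig] at hySig
        obtain ⟨hyN, hyφ⟩ := hySig
        set v := y - x₀ with hv
        have hynorm : ‖v - (h * c) • nv‖ < 2 * r * h := by
          rw [dist_eq_norm] at hydist
          have heq : x₀ + (h * c) • nv - y = -(v - (h * c) • nv) := by rw [hv]; abel
          rw [heq, norm_neg] at hydist
          exact hydist
        have hvnorm : ‖v‖ ≤ h * |c| + 2 * r * h := by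
          have h1 : ‖v‖ ≤ ‖v - (h * c) • nv‖ + ‖(h * c) • nv‖ := by
            calc ‖v‖ = ‖(v - (h * c) • nv) + (h * c) • nv‖ := by
                  congr 1; abel
              _ ≤ _ := norm_add_le _ _
          have h2 : ‖(h * c) • nv‖ = h * |c| := by
            rw [norm_smul, hnv1, mul_one, Real.norm_eq_abs, abs_mul, abs_of_pos hhpos]
          linarith [h1, hynorm]
        have hptnorm : ‖((h, v) : ℝ × EuclideanSpace ℝ (Fin n))‖ ≤ h * M := by
          have h1 := hnormle h v
          rw [abs_of_pos hhpos] at h1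
          rw [hM]; linarith [h1, hvnorm]
        have hptlt : ‖((h, v) : ℝ × EuclideanSpace ℝ (Fin n))‖ < δ₃ := by
          apply lt_of_le_of_lt hptnorm
          calc h * M < (δ₃ / M) * M := mul_lt_mul_of_pos_right hhlt hMpos
            _ = δ₃ := by field_simp
        have hkey' := hkey₃ (t₀ + h, x₀ + v) (by rw [hsub]; exact hptlt)
        rw [hsub] at hkey'
        have hyeq : ((t₀ + h, x₀ + v) : ℝ × EuclideanSpace ℝ (Fin n)) = (t₀ + h, y) := by
          rw [hv]; simp
        rw [hyeq] at hkey'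
        have hφy : φ (t₀ + h, y) = 0 := hyφ
        have hDv : D (h, v) = h * A + ⟪G, v⟫ := hDlin h v
        have hGsplit : ⟪G, v⟫ = h * c * g + ⟪G, v - (h * c) • nv⟫ := by
          have hsplit : v = (h * c) • nv + (v - (h * c) • nv) := by abel
          calc ⟪G, v⟫ = ⟪G, (h * c) • nv + (v - (h * c) • nv)⟫ := by rw [← hsplit]
            _ = ⟪G, (h * c) • nv⟫ + ⟪G, v - (h * c) • nv⟫ := inner_add_right _ _ _
            _ = h * c * g + ⟪G, v - (h * c) • nv⟫ := by rw [real_inner_smul_right, hGnv]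
        have hCS : |⟪G, v - (h * c) • nv⟫| ≤ g * (2 * r * h) := by
          calc |⟪G, v - (h * c) • nv⟫| ≤ ‖G‖ * ‖v - (h * c) • nv‖ := abs_real_inner_le_norm _ _
            _ ≤ g * (2 * r * h) := by
                rw [← hgdef]
                exact mul_le_mul_of_nonneg_left hynorm.le hgpos.le
        have hbound : |h * (A + c * g)| ≤ ε₃ * (h * M) + g * (2 * r * h) := by
          have h1 : |φ (t₀ + h, y) - D (h, v)|
              ≤ ε₃ * ‖((h, v) : ℝ × EuclideanSpace ℝ (Fin n))‖ := hkey'.2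
          have h2 : |φ (t₀ + h, y) - D (h, v)| ≤ ε₃ * (h * M) :=
            h1.trans (mul_le_mul_of_nonneg_left hptnorm hε₃pos.le)
          have h3 : h * (A + c * g) = -(φ (t₀ + h, y) - D (h, v)) - ⟪G, v - (h * c) • nv⟫ := by
            rw [hφy, hDv, hGsplit]; ring
          rw [h3]
          calc |(-(φ (t₀ + h, y) - D (h, v)) - ⟪G, v - (h * c) • nv⟫)|
              ≤ |(-(φ (t₀ + h, y) - D (h, v)))| + |⟪G, v - (h * c) • nv⟫| := abs_sub _ _
            _ ≤ ε₃ * (h * M) + g * (2 * r * h) := by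
                rw [abs_neg]; exact add_le_add h2 hCS
        have h4 : h * |A + c * g| ≤ ε₃ * (h * M) + g * (2 * r * h) := by
          rwa [abs_mul, abs_of_pos hhpos] at hbound
        have h4' : h * |A + c * g| ≤ h * (ε₃ * M + g * (2 * r)) := by linarith [h4]
        have h5 : |A + c * g| ≤ ε₃ * M + g * (2 * r) :=
          le_of_mul_le_mul_left h4' hhpos
        have h6 : ε₃ * M ≤ ε / 2 := by
          have hM3 : M ≤ 3 + |c| := by rw [hM]; linarith
          have h61 : ε₃ * M ≤ ε₃ * (3 + |c|) := mul_le_mul_of_nonneg_left hM3 hε₃pos.le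
          have h62 : ε₃ * (3 + |c|) = ε / 2 := by
            rw [hε₃]; field_simp
          exact h61.trans h62.le
        have h7 : g * (2 * r) ≤ ε / 2 := by
          have h71 : g * r ≤ g * (ε / (4 * g)) := mul_le_mul_of_nonneg_left hr2 hgpos.le
          have h72 : g * (ε / (4 * g)) = ε / 4 := by field_simp
          have h73 : g * (2 * r) = 2 * (g * r) := by ring
          rw [h73]
          calc 2 * (g * r) ≤ 2 * (g * (ε / (4 * g))) := by
                exact mul_le_mul_of_nonneg_left h71 (by norm_num)
            _ = ε / 2 := by rw [h72]; ring
        exact h5.trans ((add_le_add h6 h7).trans (le_of_eq (by ring)))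
      linarith [hle (|A + c * g| / 2) (by positivity)]
    have hcV : c = -A / g := by
      field_simp
      linarith [hzero]
    rw [hcV, hV]
end
end

section
/- Let x₀∈ℝ², ε>0, and f: B_ε(x₀)→ℝ be continuous with continuous first partial derivatives ∂₁f and ∂₂f on B_ε(x₀). Suppose ∂₁∂₂f(x) exists for every x∈B_ε(x₀) and is continuous at x₀. Then ∂₂∂₁f(x₀) exists and ∂₁∂₂f(x₀)=∂₂∂₁f(x₀). -/
open Set

noncomputable section

private lemma mvt_both' (g g' : ℝ → ℝ) {x y : ℝ} (hxy : x ≠ y)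
    (hd : ∀ t ∈ Icc (min x y) (max x y), HasDerivAt g (g' t) t) :
    ∃ c ∈ Ioo (min x y) (max x y), g y - g x = (y - x) * g' c := by
  rcases hxy.lt_or_gt with h | h
  · have hmin : min x y = x := min_eq_left h.le
    have hmax : max x y = y := max_eq_right h.le
    rw [hmin, hmax] at hd ⊢
    obtain ⟨c, hc, hc'⟩ := exists_hasDerivAt_eq_slope g g' h
      (fun t ht => (hd t ht).continuousAt.continuousWithinAt)
      (fun t ht => hd t (Ioo_subset_Icc_self ht))
    have hne : y - x ≠ 0 := by intro h'; apply hxy.symm; linarith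
    exact ⟨c, hc, by rw [hc', mul_div_cancel₀ _ hne]⟩
  · have hmin : min x y = y := min_eq_right h.le
    have hmax : max x y = x := max_eq_left h.le
    rw [hmin, hmax] at hd ⊢
    obtain ⟨c, hc, hc'⟩ := exists_hasDerivAt_eq_slope g g' h
      (fun t ht => (hd t ht).continuousAt.continuousWithinAt)
      (fun t ht => hd t (Ioo_subset_Icc_self ht))
    have hne : x - y ≠ 0 := by intro h'; apply hxy; linarith
    refine ⟨c, hc, ?_⟩
    have : g x - g y = (x - y) * g' c := by rw [hc', mul_div_cancel₀ _ hne]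
    linarith [this]

private lemma mem_Ioo_abs {x h c : ℝ} (hh : h ≠ 0)
    (hc : c ∈ Ioo (min x (x + h)) (max x (x + h))) : |c - x| < |h| := by
  rcases hh.lt_or_gt with h' | h'
  · rw [min_eq_right (by linarith), max_eq_left (by linarith)] at hc
    rw [abs_of_neg h', abs_lt]
    exact ⟨by linarith [hc.1], by linarith [hc.2]⟩
  · rw [min_eq_left (by linarith), max_eq_right (by linarith)] at hc
    rw [abs_of_pos h', abs_lt]
    exact ⟨by linarith [hc.1], by linarith [hc.2]⟩

private lemma mem_Icc_abs {x h t : ℝ}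
    (ht : t ∈ Icc (min x (x + h)) (max x (x + h))) : |t - x| ≤ |h| := by
  rcases le_total 0 h with h' | h'
  · rw [min_eq_left (by linarith), max_eq_right (by linarith)] at ht
    rw [abs_le, abs_of_nonneg h']
    exact ⟨by linarith [ht.1], by linarith [ht.2]⟩
  · rw [min_eq_right (by linarith), max_eq_left (by linarith)] at ht
    rw [abs_le, abs_of_nonpos h']
    exact ⟨by linarith [ht.1], by linarith [ht.2]⟩


/-- Refined version of Schwarz's theorem: if `f` is continuous on a ball `B ⊆ ℝ²` with
continuous first partial derivatives `f₁, f₂` on `B`, and if `∂₁∂₂f` exists on `B` and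
is continuous at the center `x₀`, then `∂₂∂₁f(x₀)` exists and equals `∂₁∂₂f(x₀)`. -/
theorem refined_schwarz
    (x₀ : ℝ × ℝ) (ε : ℝ) (hε : 0 < ε)
    (B : Set (ℝ × ℝ)) (hB : B = {p : ℝ × ℝ | (p.1 - x₀.1) ^ 2 + (p.2 - x₀.2) ^ 2 < ε ^ 2})
    (f f₁ f₂ f₁₂ : ℝ × ℝ → ℝ)
    (hf : ContinuousOn f B)
    -- the first partial derivatives exist on `B` and are continuous there
    (hf₁ : ∀ p ∈ B, HasDerivAt (fun s => f (s, p.2)) (f₁ p) p.1)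
    (hf₂ : ∀ p ∈ B, HasDerivAt (fun s => f (p.1, s)) (f₂ p) p.2)
    (hf₁c : ContinuousOn f₁ B) (hf₂c : ContinuousOn f₂ B)
    -- `∂₁∂₂ f` exists on `B` and is continuous at `x₀`
    (hf₁₂ : ∀ p ∈ B, HasDerivAt (fun s => f₂ (s, p.2)) (f₁₂ p) p.1)
    (hf₁₂c : ContinuousWithinAt f₁₂ B x₀) :
    HasDerivAt (fun s => f₁ (x₀.1, s)) (f₁₂ x₀) x₀.2 := by
  obtain ⟨a, b⟩ := x₀
  simp only at *
  set c := f₁₂ (a, b) with hc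
  -- membership helper
  have hmem : ∀ u v : ℝ, |u - a| ≤ ε / 2 → |v - b| ≤ ε / 2 → (u, v) ∈ B := by
    intro u v hu hv
    rw [hB]
    simp only [mem_setOf_eq]
    nlinarith [sq_abs (u - a), sq_abs (v - b),
      mul_self_le_mul_self (abs_nonneg (u - a)) hu,
      mul_self_le_mul_self (abs_nonneg (v - b)) hv, sq_nonneg ε]
  -- the double MVT key step
  have key : ∀ h k : ℝ, h ≠ 0 → k ≠ 0 → |h| < ε / 2 → |k| < ε / 2 →
      ∃ ξ η : ℝ, |ξ - a| < |h| ∧ |η - b| < |k| ∧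
        (f (a + h, b + k) - f (a + h, b)) - (f (a, b + k) - f (a, b))
          = k * (h * f₁₂ (ξ, η)) := by
    intro h k hh hk hhε hkε
    have hbk : b ≠ b + k := by intro h'; apply hk; linarith
    -- step 1 : MVT in the second variable for g t = f (a+h, t) - f (a, t)
    have hd1 : ∀ t ∈ Icc (min b (b + k)) (max b (b + k)),
        HasDerivAt (fun t => f (a + h, t) - f (a, t)) (f₂ (a + h, t) - f₂ (a, t)) t := by
      intro t ht
      have htb : |t - b| ≤ |k| := mem_Icc_abs (x := b) (h := k) ht
      have m1 : (a + h, t) ∈ B := hmem _ _ (by simp; linarith [hhε]) (by linarith)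
      have m2 : (a, t) ∈ B := hmem _ _ (by simp [abs_nonneg]; linarith) (by linarith)
      exact ((hf₂ (a + h, t) m1).sub (hf₂ (a, t) m2))
    obtain ⟨η, hη, hηeq⟩ := mvt_both' (fun t => f (a + h, t) - f (a, t))
      (fun t => f₂ (a + h, t) - f₂ (a, t)) hbk hd1
    have hηb : |η - b| < |k| := mem_Ioo_abs hk hη
    -- step 2 : MVT in the first variable for φ s = f₂ (s, η)
    have hah : a ≠ a + h := by intro h'; apply hh; linarith
    have hd2 : ∀ s ∈ Icc (min a (a + h)) (max a (a + h)),
        HasDerivAt (fun s => f₂ (s, η)) (f₁₂ (s, η)) s := by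
      intro s hs
      have hsa : |s - a| ≤ |h| := mem_Icc_abs (x := a) (h := h) hs
      have m : (s, η) ∈ B := hmem _ _ (by linarith) (by linarith)
      exact hf₁₂ (s, η) m
    obtain ⟨ξ, hξ, hξeq⟩ := mvt_both' (fun s => f₂ (s, η)) (fun s => f₁₂ (s, η)) hah hd2
    have hξa : |ξ - a| < |h| := mem_Ioo_abs hh hξ
    refine ⟨ξ, η, hξa, hηb, ?_⟩
    rw [hξeq] at hηeq
    -- hηeq : ... = (b + k - b) * ((a + h - a) * f₁₂ (ξ, η))
    nlinarith [hηeq]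
  -- metric continuity of f₁₂ at x₀
  rw [Metric.continuousWithinAt_iff] at hf₁₂c
  rw [hasDerivAt_iff_tendsto_slope, Metric.tendsto_nhdsWithin_nhds]
  intro δ hδ
  obtain ⟨r, hr, hrc⟩ := hf₁₂c (δ / 2) (by linarith)
  refine ⟨min r (ε / 2), by positivity, ?_⟩
  intro k' hk' hdist
  set k := k' - b with hkdef
  have hk0 : k ≠ 0 := sub_ne_zero.mpr hk'
  have hkr : |k| < min r (ε / 2) := by rwa [Real.dist_eq] at hdist
  have hkε2 : |k| < ε / 2 := lt_of_lt_of_le hkr (min_le_right _ _)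
  have hkrr : |k| < r := lt_of_lt_of_le hkr (min_le_left _ _)
  -- ψ s = (f (s, b + k) - f (s, b)) / k has derivative Q at a
  have memB1 : ((a : ℝ), b + k) ∈ B := hmem _ _ (by simp; positivity) (by simp; linarith)
  have memB2 : ((a : ℝ), b) ∈ B := hmem _ _ (by simp; positivity) (by simp; positivity)
  have hψ : HasDerivAt (fun s => (f (s, b + k) - f (s, b)) / k)
      ((f₁ (a, b + k) - f₁ (a, b)) / k) a :=
    ((hf₁ (a, b + k) memB1).sub (hf₁ (a, b) memB2)).div_const k
  rw [hasDerivAt_iff_tendsto_slope] at hψ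
  -- eventual bound on the slope
  have hev : ∀ᶠ x in nhdsWithin a {a}ᶜ,
      |slope (fun s => (f (s, b + k) - f (s, b)) / k) a x - c| ≤ δ / 2 := by
    filter_upwards [self_mem_nhdsWithin,
      nhdsWithin_le_nhds (Metric.ball_mem_nhds a (show (0:ℝ) < min r (ε/2) by positivity))]
      with x hx1 hx2
    have hxa : x ≠ a := hx1
    have hh0 : x - a ≠ 0 := sub_ne_zero.mpr hxa
    have hxr : |x - a| < min r (ε / 2) := by rwa [Metric.mem_ball, Real.dist_eq] at hx2
    obtain ⟨ξ, η, hξ, hη, heq⟩ := key (x - a) k hh0 hk0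
      (lt_of_lt_of_le hxr (min_le_right _ _)) hkε2
    have hξr : |ξ - a| < r := lt_of_lt_of_le (hξ.trans hxr) (min_le_left _ _)
    have hηr : |η - b| < r := hη.trans hkrr
    have hξε : |ξ - a| ≤ ε / 2 := le_of_lt (lt_of_lt_of_le (hξ.trans hxr) (min_le_right _ _))
    have hηε : |η - b| ≤ ε / 2 := le_of_lt (hη.trans hkε2)
    have hmemξη : (ξ, η) ∈ B := hmem _ _ hξε hηε
    have hdd : dist ((ξ, η) : ℝ × ℝ) (a, b) < r := by
      rw [Prod.dist_eq]
      simp only [Real.dist_eq]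
      exact max_lt hξr hηr
    have hbound : |f₁₂ (ξ, η) - c| < δ / 2 := by
      have := hrc hmemξη hdd
      rwa [Real.dist_eq] at this
    have hslope : slope (fun s => (f (s, b + k) - f (s, b)) / k) a x = f₁₂ (ξ, η) := by
      rw [slope_def_field]
      have hx' : x = a + (x - a) := by ring
      rw [div_sub_div_same, div_div]
      rw [show f (x, b + k) = f (a + (x - a), b + k) by rw [← hx'],
          show f (x, b) = f (a + (x - a), b) by rw [← hx']]
      rw [show f (a + (x - a), b + k) - f (a + (x - a), b) - (f (a, b + k) - f (a, b))
            = k * ((x - a) * f₁₂ (ξ, η)) from heq]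
      field_simp
    rw [hslope]
    exact hbound.le
  -- pass to the limit
  have hlim : |(f₁ (a, b + k) - f₁ (a, b)) / k - c| ≤ δ / 2 :=
    le_of_tendsto ((hψ.sub_const c).abs) hev
  rw [Real.dist_eq, slope_def_field]
  calc |(f₁ (a, k') - f₁ (a, b)) / (k' - b) - c|
      = |(f₁ (a, b + k) - f₁ (a, b)) / k - c| := by rw [hkdef]; ring_nf
    _ ≤ δ / 2 := hlim
    _ < δ := by linarith
end
end

section
/- Let U⊆ℝⁿ be open, Σ={x∈U: d(x)=0}, where d: U→ℝ is of class C¹ with ‖∇d(x)‖=1 on U and |d(x)|=dist(x,Σ) for all x∈U. Let F^Σ: U→ℝ be of class C¹ and g: U→ℝ continuous, and define f(x) = F^Σ(x) − (d(x)/(ω_n|d(x)|ⁿ))·∫_{‖x−y‖≤|d(x)|} g(y) dy for d(x)≠0 and f(x)=F^Σ(x) for d(x)=0, where ω_n is the Lebesgue volume of the unit ball in ℝⁿ. Let x₀∈Σ, n₀=∇d(x₀), and suppose ε>0 is such that x₀+s·n₀∈U and d(x₀+s·n₀)=s for all |s|<ε. Then lim_{s→0} (f(x₀+s·n₀)−f(x₀))/s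 = ⟨∇F^Σ(x₀), n₀⟩ − g(x₀). -/
open MeasureTheory Set Metric Filter
open scoped Topology

noncomputable section

/-- The normal derivative of the extension `f` of boundary data `F` from the
hypersurface `Σ = {d = 0}`: along the normal line through `x₀ ∈ Σ`, the difference
quotients of `f` converge to `⟨∇F(x₀), n₀⟩ - g(x₀)`. -/
theorem normal_derivative_of_extension
    {n : ℕ} (U : Set (EuclideanSpace ℝ (Fin n))) (hU : IsOpen U)
    (d F g : EuclideanSpace ℝ (Fin n) → ℝ)
    (Sig : Set (EuclideanSpace ℝ (Fin n))) (hSig : Sig = {x ∈ U | d x = 0})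
    (hd : ContDiffOn ℝ 1 d U)
    (hunit : ∀ x ∈ U, ‖gradient d x‖ = 1)
    (hdist : ∀ x ∈ U, |d x| = infDist x Sig)
    (hF : ContDiffOn ℝ 1 F U) (hg : ContinuousOn g U)
    (ω : ℝ) (hω : ω = (volume (ball (0 : EuclideanSpace ℝ (Fin n)) 1)).toReal)
    (f : EuclideanSpace ℝ (Fin n) → ℝ)
    (hf : ∀ x, f x = F x - (d x / (ω * |d x| ^ n)) * ∫ y in closedBall x |d x|, g y)
    (x₀ : EuclideanSpace ℝ (Fin n)) (hx₀ : x₀ ∈ Sig)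
    (ε : ℝ) (hε : 0 < ε)
    (hline : ∀ s : ℝ, |s| < ε →
      x₀ + s • gradient d x₀ ∈ U ∧ d (x₀ + s • gradient d x₀) = s) :
    Tendsto (fun s : ℝ => (f (x₀ + s • gradient d x₀) - f x₀) / s) (𝓝[≠] 0)
      (𝓝 ((inner ℝ (gradient F x₀) (gradient d x₀) : ℝ) - g x₀)) := by
  have hx₀U : x₀ ∈ U := by rw [hSig] at hx₀; exact hx₀.1
  have hdx₀ : d x₀ = 0 := by rw [hSig] at hx₀; exact hx₀.2
  set n₀ := gradient d x₀ with hn₀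
  have hn₀norm : ‖n₀‖ = 1 := hunit x₀ hx₀U
  -- n ≥ 1
  have hn : 0 < n := by
    rcases Nat.eq_zero_or_pos n with h | h
    · exfalso
      subst h
      have : n₀ = 0 := Subsingleton.elim _ _
      rw [this, norm_zero] at hn₀norm
      norm_num at hn₀norm
    · exact h
  -- ω > 0
  have hω0 : 0 < ω := by
    rw [hω]
    refine ENNReal.toReal_pos ?_ ?_
    · exact (measure_ball_pos volume 0 one_pos).ne'
    · exact measure_ball_lt_top.ne
  -- f x₀ = F x₀
  have hfx₀ : f x₀ = F x₀ := by
    rw [hf x₀, hdx₀]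
    simp
  -- volume of closed balls
  have hvol : ∀ (x : EuclideanSpace ℝ (Fin n)) (r : ℝ), 0 ≤ r →
      (volume (closedBall x r)).toReal = ω * r ^ n := by
    intro x r hr
    rw [Measure.addHaar_closedBall volume x hr, finrank_euclideanSpace_fin]
    rw [ENNReal.toReal_mul, ENNReal.toReal_ofReal (by positivity), hω, mul_comm]
  -- the averaged-integral term tends to g x₀
  obtain ⟨r, hr0, hrU⟩ : ∃ r > 0, closedBall x₀ r ⊆ U :=
    nhds_basis_closedBall.mem_iff.1 (hU.mem_nhds hx₀U)
  have hAtend : Tendsto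
      (fun s : ℝ => (∫ y in closedBall (x₀ + s • n₀) |s|, g y) / (ω * |s| ^ n))
      (𝓝[≠] 0) (𝓝 (g x₀)) := by
    rw [Metric.tendsto_nhdsWithin_nhds]
    intro ε' hε'
    have hgc : ContinuousAt g x₀ := hg.continuousAt (hU.mem_nhds hx₀U)
    obtain ⟨δ, hδ0, hδ⟩ := Metric.continuousAt_iff.1 hgc (ε' / 2) (by linarith)
    refine ⟨min (δ / 2) (r / 2), by positivity, ?_⟩
    intro s hs hsd
    have hs0 : s ≠ 0 := hs
    have habs : 0 < |s| := abs_pos.2 hs0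
    rw [Real.dist_eq, sub_zero] at hsd
    set x_s := x₀ + s • n₀ with hxs
    have hdist_xs : dist x_s x₀ = |s| := by
      rw [hxs, dist_eq_norm]
      simp [norm_smul, hn₀norm]
    -- the ball is inside closedBall x₀ δ and inside U
    have hBsub : ∀ y ∈ closedBall x_s |s|, dist y x₀ ≤ 2 * |s| := by
      intro y hy
      calc dist y x₀ ≤ dist y x_s + dist x_s x₀ := dist_triangle _ _ _
        _ ≤ |s| + |s| := add_le_add (mem_closedBall.1 hy) hdist_xs.le
        _ = 2 * |s| := by ring
    have hBU : closedBall x_s |s| ⊆ U := by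
      intro y hy
      apply hrU
      rw [mem_closedBall]
      calc dist y x₀ ≤ 2 * |s| := hBsub y hy
        _ ≤ 2 * (r / 2) := by nlinarith [lt_of_lt_of_le hsd (min_le_right _ _)]
        _ = r := by ring
    have hBδ : ∀ y ∈ closedBall x_s |s|, dist y x₀ < δ := by
      intro y hy
      calc dist y x₀ ≤ 2 * |s| := hBsub y hy
        _ < 2 * (δ / 2) := by nlinarith [lt_of_lt_of_le hsd (min_le_left _ _)]
        _ = δ := by ring
    -- volume
    have hV : (volume (closedBall x_s |s|)).toReal = ω * |s| ^ n := hvol _ _ (abs_nonneg s)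
    have hVpos : 0 < ω * |s| ^ n := by positivity
    -- integrability of g and constants on the ball
    have hint : IntegrableOn g (closedBall x_s |s|) volume :=
      ContinuousOn.integrableOn_compact (isCompact_closedBall _ _) (hg.mono hBU)
    -- rewrite the difference as an average of g - g x₀
    have hconst : ∫ _ in closedBall x_s |s|, g x₀ = (ω * |s| ^ n) * g x₀ := by
      rw [setIntegral_const, measureReal_def, hV, smul_eq_mul]
    have key : (∫ y in closedBall x_s |s|, g y) / (ω * |s| ^ n) - g x₀
        = (∫ y in closedBall x_s |s|, (g y - g x₀)) / (ω * |s| ^ n) := by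
      rw [integral_sub hint (integrableOn_const measure_closedBall_lt_top.ne),
        hconst]
      field_simp
    have hbound : ‖∫ y in closedBall x_s |s|, (g y - g x₀)‖ ≤ (ε' / 2) * (ω * |s| ^ n) := by
      have := MeasureTheory.norm_setIntegral_le_of_norm_le_const (μ := volume)
        (f := fun y => g y - g x₀) (s := closedBall x_s |s|) (C := ε' / 2)
        measure_closedBall_lt_top
        (fun y hy => by
          have := hδ (hBδ y hy)
          rw [Real.dist_eq] at this
          rw [Real.norm_eq_abs]
          exact this.le)
      rwa [measureReal_def, hV] at this
    rw [Real.dist_eq, key]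
    rw [abs_div, abs_of_pos hVpos]
    rw [div_lt_iff₀ hVpos]
    calc |∫ y in closedBall x_s |s|, (g y - g x₀)| ≤ (ε' / 2) * (ω * |s| ^ n) := hbound
      _ < ε' * (ω * |s| ^ n) := by nlinarith
  -- the F term tends to the directional derivative
  have hFdiff : DifferentiableAt ℝ F x₀ :=
    (hF.contDiffAt (hU.mem_nhds hx₀U)).differentiableAt one_ne_zero
  have hL : HasDerivAt (fun s : ℝ => x₀ + s • n₀) n₀ 0 := by
    simpa using ((hasDerivAt_id (0 : ℝ)).smul_const n₀).const_add x₀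
  have hFL : HasDerivAt (fun s : ℝ => F (x₀ + s • n₀)) (fderiv ℝ F x₀ n₀) 0 := by
    have h0 : x₀ + (0:ℝ) • n₀ = x₀ := by simp
    exact HasFDerivAt.comp_hasDerivAt 0 (by rw [h0]; exact hFdiff.hasFDerivAt) hL
  have hgradF : fderiv ℝ F x₀ n₀ = (inner ℝ (gradient F x₀) n₀ : ℝ) := by
    rw [gradient, InnerProductSpace.toDual_symm_apply]
  have hFtend : Tendsto (fun s : ℝ => (F (x₀ + s • n₀) - F x₀) / s) (𝓝[≠] 0)
      (𝓝 ((inner ℝ (gradient F x₀) n₀ : ℝ))) := by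
    have := hasDerivAt_iff_tendsto_slope.1 hFL
    rw [hgradF] at this
    refine this.congr (fun s => ?_)
    rw [slope_def_field]
    simp
  -- combine
  have heq : ∀ᶠ s in 𝓝[≠] (0 : ℝ),
      (f (x₀ + s • n₀) - f x₀) / s
        = (F (x₀ + s • n₀) - F x₀) / s
          - (∫ y in closedBall (x₀ + s • n₀) |s|, g y) / (ω * |s| ^ n) := by
    have hball : Metric.ball (0 : ℝ) ε ∈ 𝓝[≠] (0 : ℝ) :=
      nhdsWithin_le_nhds (ball_mem_nhds _ hε)
    filter_upwards [hball, self_mem_nhdsWithin] with s hsball hs0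
    have hsε : |s| < ε := by rwa [mem_ball, Real.dist_eq, sub_zero] at hsball
    have hs0' : s ≠ 0 := hs0
    have habs : (0:ℝ) < |s| := abs_pos.2 hs0'
    obtain ⟨-, hds⟩ := hline s hsε
    rw [hf (x₀ + s • n₀), hds, hfx₀]
    have hden : ω * |s| ^ n ≠ 0 := by positivity
    field_simp
    ring
  rw [tendsto_congr' heq]
  exact hFtend.sub hAtend
end
end

section
/- Let J=(a,b)⊆ℝ, Ω⊆ℝⁿ open, and f: J×Ω→ℝⁿ satisfy the one-sided Lipschitz (dissipativity) condition ⟨f(t,x)−f(t,y), x−y⟩ ≤ k(t)‖x−y‖² for all t∈J and x,y∈Ω, where k∈L¹(J). Let x, y: I→Ω be absolutely continuous functions on a subinterval I⊆J satisfying ẋ(t)=f(t,x(t)) and ẏ(t)=f(t,y(t)) for almost every t∈I. If x(t₀)=y(t₀) for some t₀∈I, then x(t)=y(t) for all t∈I with t≥t₀. -/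
open MeasureTheory Set Filter Metric Topology

noncomputable section

section auxlemmas

variable {E : Type*} [NormedAddCommGroup E] [InnerProductSpace ℝ E] [CompleteSpace E]

lemma energy_aux {φ : ℝ → E} {s t : ℝ} (hst : s ≤ t) (hφ : IntegrableOn φ (Ioc s t)) :
    ∫ u in Ioc s t, (inner ℝ (∫ v in Ioc s u, φ v) (φ u) : ℝ)
      = (1/2) * ‖∫ u in Ioc s t, φ u‖^2 := by
  set μ := volume.restrict (Ioc s t) with hμ
  have hφμ : Integrable φ μ := hφ
  set Q : ℝ × ℝ → ℝ := fun p => (inner ℝ (φ p.2) (φ p.1) : ℝ) with hQdef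
  have hQm : AEStronglyMeasurable Q (μ.prod μ) :=
    AEStronglyMeasurable.inner (hφμ.aestronglyMeasurable.comp_snd : AEStronglyMeasurable (fun p : ℝ × ℝ => φ p.2) (μ.prod μ))
      (hφμ.aestronglyMeasurable.comp_fst : AEStronglyMeasurable (fun p : ℝ × ℝ => φ p.1) (μ.prod μ))
  have hQ : Integrable Q (μ.prod μ) := by
    refine Integrable.mono' (hφμ.norm.mul_prod hφμ.norm) hQm ?_
    refine Filter.Eventually.of_forall fun p => ?_
    calc ‖(inner ℝ (φ p.2) (φ p.1) : ℝ)‖ ≤ ‖φ p.2‖ * ‖φ p.1‖ := norm_inner_le_norm _ _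
    _ = ‖φ p.1‖ * ‖φ p.2‖ := mul_comm _ _
  set T : Set (ℝ × ℝ) := {p | p.2 ≤ p.1} with hTdef
  set T' : Set (ℝ × ℝ) := {p | p.1 ≤ p.2} with hT'def
  have hT : MeasurableSet T := measurableSet_le measurable_snd measurable_fst
  have hT' : MeasurableSet T' := measurableSet_le measurable_fst measurable_snd
  have hQT : Integrable (T.indicator Q) (μ.prod μ) := hQ.indicator hT
  have hQT' : Integrable (T'.indicator Q) (μ.prod μ) := hQ.indicator hT'
  -- pull inner out of integrals
  have hinner : ∀ (c : E) (ν : Measure ℝ), Integrable φ ν →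
      ∫ v, (inner ℝ (φ v) c : ℝ) ∂ν = inner ℝ (∫ v, φ v ∂ν) c := by
    intro c ν hν
    rw [real_inner_comm, ← integral_inner hν c]
    exact integral_congr_ae (Filter.Eventually.of_forall fun v => real_inner_comm _ _)
  -- Step 1 : LHS as product integral over T
  have step1 : ∫ u in Ioc s t, (inner ℝ (∫ v in Ioc s u, φ v) (φ u) : ℝ)
      = ∫ p, T.indicator Q p ∂(μ.prod μ) := by
    rw [← integral_integral (f := fun u v => T.indicator Q (u, v)) hQT]
    refine integral_congr_ae ?_
    filter_upwards [ae_restrict_mem measurableSet_Ioc] with u hu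
    have hIocu : Ioc s u = Iic u ∩ Ioc s t := by
      ext v
      simp only [mem_Ioc, mem_inter_iff, mem_Iic]
      exact ⟨fun ⟨h1, h2⟩ => ⟨h2, h1, h2.trans hu.2⟩, fun ⟨h1, h2, _⟩ => ⟨h2, h1⟩⟩
    have hres : volume.restrict (Ioc s u) = μ.restrict (Iic u) := by
      rw [hμ, Measure.restrict_restrict measurableSet_Iic, hIocu]
    have h1 : ∫ v in Ioc s u, φ v = ∫ v in Iic u, φ v ∂μ := by rw [hres]
    have h2 : (inner ℝ (∫ v in Iic u, φ v ∂μ) (φ u) : ℝ)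
        = ∫ v in Iic u, (inner ℝ (φ v) (φ u) : ℝ) ∂μ := by
      rw [hinner (φ u) (μ.restrict (Iic u)) (hφμ.restrict)]
    rw [h1, h2, ← integral_indicator measurableSet_Iic]
    refine integral_congr_ae (Filter.Eventually.of_forall fun v => ?_)
    by_cases hvu : v ≤ u
    · rw [Set.indicator_of_mem (show v ∈ Iic u from hvu)]
      exact (Set.indicator_of_mem (show (u, v) ∈ T from hvu) Q).symm
    · rw [Set.indicator_of_notMem (show v ∉ Iic u from hvu)]
      exact (Set.indicator_of_notMem (show (u, v) ∉ T from hvu) Q).symm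
  -- Step 2 : symmetry
  have step2 : ∫ p, T.indicator Q p ∂(μ.prod μ) = ∫ p, T'.indicator Q p ∂(μ.prod μ) := by
    rw [← integral_integral (f := fun u v => T'.indicator Q (u, v)) hQT',
      integral_integral_swap (by exact hQT'),
      ← integral_integral (f := fun u v => T.indicator Q (u, v)) hQT]
    congr 1
    ext u
    congr 1
    ext v
    by_cases hvu : v ≤ u
    · rw [Set.indicator_of_mem (show (u, v) ∈ T from hvu),
        Set.indicator_of_mem (show (v, u) ∈ T' from hvu)]
      exact real_inner_comm _ _
    · rw [Set.indicator_of_notMem (show (u, v) ∉ T from hvu),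
        Set.indicator_of_notMem (show (v, u) ∉ T' from hvu)]
  -- diagonal is null
  have hdiag : (μ.prod μ) {p : ℝ × ℝ | p.2 = p.1} = 0 := by
    rw [Measure.prod_apply (measurableSet_eq_fun measurable_snd measurable_fst)]
    have : ∀ u : ℝ, μ (Prod.mk u ⁻¹' {p : ℝ × ℝ | p.2 = p.1}) = 0 := by
      intro u
      refine measure_mono_null (fun v hv => ?_) (measure_singleton u)
      simpa using hv
    simp [this]
  -- Step 3 : sum is the full integral
  have step3 : (∫ p, T.indicator Q p ∂(μ.prod μ)) + ∫ p, T'.indicator Q p ∂(μ.prod μ)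
      = ∫ p, Q p ∂(μ.prod μ) := by
    rw [← integral_add hQT hQT']
    refine integral_congr_ae ?_
    have : ∀ᵐ p ∂(μ.prod μ), p ∉ {q : ℝ × ℝ | q.2 = q.1} := by
      rw [ae_iff]; simpa using hdiag
    filter_upwards [this] with p hp
    rcases lt_or_gt_of_ne (show p.2 ≠ p.1 from hp) with h | h
    · rw [Set.indicator_of_mem (show p ∈ T from h.le),
        Set.indicator_of_notMem (show p ∉ T' from not_le.2 h), add_zero]
    · rw [Set.indicator_of_notMem (show p ∉ T from not_le.2 h),
        Set.indicator_of_mem (show p ∈ T' from h.le), zero_add]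
  -- Step 4 : full integral is the norm squared
  have step4 : ∫ p, Q p ∂(μ.prod μ) = ‖∫ u, φ u ∂μ‖ ^ 2 := by
    rw [← integral_integral (f := fun u v => Q (u, v)) hQ]
    have : ∀ u : ℝ, ∫ v, Q (u, v) ∂μ = (inner ℝ (∫ v, φ v ∂μ) (φ u) : ℝ) := fun u =>
      hinner (φ u) μ hφμ
    simp_rw [this]
    rw [integral_inner hφμ, real_inner_self_eq_norm_sq]
  have := step3
  rw [← step2] at this
  rw [step1]
  rw [step4] at this
  linarith

variable {E : Type*} [NormedAddCommGroup E] [NormedSpace ℝ E] [CompleteSpace E]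

omit [NormedSpace ℝ E] [CompleteSpace E] in
lemma locint_intervalIntegrable {h : ℝ → E} (hh : LocallyIntegrable h volume) (a b : ℝ) :
    IntervalIntegrable h volume a b := by
  rw [intervalIntegrable_iff]
  exact (hh.integrableOn_isCompact isCompact_Icc).mono_set uIoc_subset_uIcc

lemma ae_eq_of_ae_hasDerivAt_primitive {h : ℝ → E} (hh : LocallyIntegrable h volume) (c : ℝ)
    {ψ : ℝ → E} {S : Set ℝ}
    (hder : ∀ᵐ t ∂(volume.restrict S), HasDerivAt (fun u => ∫ v in c..u, h v) (ψ t) t) :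
    ∀ᵐ t ∂(volume.restrict S), ψ t = h t := by
  have hLDT : ∀ᵐ t ∂(volume : Measure ℝ),
      Tendsto (fun r : ℝ => ⨍ y in closedBall t r, h y) (𝓝[>] 0) (𝓝 (h t)) := by
    filter_upwards [IsUnifLocDoublingMeasure.ae_tendsto_average (μ := (volume : Measure ℝ)) hh 1]
      with t ht
    refine ht (fun _ => t) id tendsto_id ?_
    filter_upwards [self_mem_nhdsWithin] with r hr
    have h0 : (0:ℝ) ≤ 1 * r := by simpa using le_of_lt hr
    exact mem_closedBall_self h0
  filter_upwards [ae_restrict_of_ae hLDT, hder] with t hLD hD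
  set G : ℝ → E := fun u => ∫ v in c..u, h v with hG
  have hs : Tendsto (slope G t) (𝓝[≠] t) (𝓝 (ψ t)) := hasDerivAt_iff_tendsto_slope.1 hD
  have hplus : Tendsto (fun r : ℝ => t + r) (𝓝[>] (0:ℝ)) (𝓝[≠] t) := by
    refine tendsto_nhdsWithin_of_tendsto_nhds_of_eventually_within _ ?_ ?_
    · have h1 : Tendsto (fun r : ℝ => t + r) (𝓝 0) (𝓝 t) := by
        simpa using (tendsto_const_nhds.add tendsto_id : Tendsto (fun r : ℝ => t + r) (𝓝 0) (𝓝 (t + 0)))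
      exact h1.mono_left nhdsWithin_le_nhds
    · filter_upwards [self_mem_nhdsWithin] with r (hr : (0:ℝ) < r)
      simp only [mem_compl_iff, mem_singleton_iff]
      intro hc; nlinarith [hc]
  have hminus : Tendsto (fun r : ℝ => t - r) (𝓝[>] (0:ℝ)) (𝓝[≠] t) := by
    refine tendsto_nhdsWithin_of_tendsto_nhds_of_eventually_within _ ?_ ?_
    · have h1 : Tendsto (fun r : ℝ => t - r) (𝓝 0) (𝓝 t) := by
        simpa using (tendsto_const_nhds.sub tendsto_id : Tendsto (fun r : ℝ => t - r) (𝓝 0) (𝓝 (t - 0)))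
      exact h1.mono_left nhdsWithin_le_nhds
    · filter_upwards [self_mem_nhdsWithin] with r (hr : (0:ℝ) < r)
      simp only [mem_compl_iff, mem_singleton_iff]
      intro hc; nlinarith [hc]
  have h1 := hs.comp hplus
  have h2 := hs.comp hminus
  have havg : Tendsto (fun r : ℝ => ((1:ℝ)/2) • (slope G t (t + r) + slope G t (t - r)))
      (𝓝[>] (0:ℝ)) (𝓝 (ψ t)) := by
    have := ((h1.add h2).const_smul ((1:ℝ)/2))
    have heq : ((1:ℝ)/2) • (ψ t + ψ t) = ψ t := by
      rw [smul_add, ← add_smul]; norm_num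
    rw [heq] at this
    exact this
  -- identify the average with the symmetric slope
  have hkey : Tendsto (fun r : ℝ => ⨍ y in closedBall t r, h y) (𝓝[>] (0:ℝ)) (𝓝 (ψ t)) := by
    refine havg.congr' ?_
    filter_upwards [self_mem_nhdsWithin] with r (hr : (0:ℝ) < r)
    have hstep : G (t + r) - G (t - r) = ∫ v in (t - r)..(t + r), h v := by
      rw [hG]
      exact intervalIntegral.integral_interval_sub_left
        (locint_intervalIntegrable hh c (t + r)) (locint_intervalIntegrable hh c (t - r))
    have haux : ⨍ y in closedBall t r, h y = ((2*r)⁻¹ : ℝ) • (G (t + r) - G (t - r)) := by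
      rw [setAverage_eq, Real.closedBall_eq_Icc, Real.volume_real_Icc, hstep,
        intervalIntegral.integral_of_le (by linarith), ← integral_Icc_eq_integral_Ioc]
      congr 1
      rw [max_eq_left (by linarith)]
      congr 1
      ring
    rw [haux]
    have hr0 : r ≠ 0 := ne_of_gt hr
    rw [slope_def_module, slope_def_module]
    simp only [add_sub_cancel_left, sub_sub_cancel_left]
    rw [smul_add, smul_smul, smul_smul, smul_sub]
    have e1 : (1:ℝ)/2 * r⁻¹ = (2*r)⁻¹ := by field_simp
    have e2 : (1:ℝ)/2 * (-r)⁻¹ = -(2*r)⁻¹ := by field_simp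
    rw [e1, e2, neg_smul, smul_sub, smul_sub]
    abel
  exact tendsto_nhds_unique hkey hLD
end auxlemmas

set_option maxHeartbeats 2000000 in
/-- Forward uniqueness for ODEs with a one-sided Lipschitz (dissipative type)
right-hand side. -/
theorem forward_uniqueness_one_sided_Lipschitz
    {n : ℕ} (a b : ℝ) (J : Set ℝ) (hJ : J = Ioo a b)
    (Ω : Set (EuclideanSpace ℝ (Fin n))) (hΩ : IsOpen Ω)
    (f : ℝ → EuclideanSpace ℝ (Fin n) → EuclideanSpace ℝ (Fin n))
    (k : ℝ → ℝ) (hk : IntegrableOn k J)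
    (hosl : ∀ t ∈ J, ∀ x ∈ Ω, ∀ y ∈ Ω,
      (inner ℝ (f t x - f t y) (x - y) : ℝ) ≤ k t * ‖x - y‖ ^ 2)
    (I : Set ℝ) (hI : I ⊆ J) (hIint : I.OrdConnected)
    (x y : ℝ → EuclideanSpace ℝ (Fin n))
    (hxΩ : ∀ t ∈ I, x t ∈ Ω) (hyΩ : ∀ t ∈ I, y t ∈ Ω)
    (hxac : AbsContOn x I) (hyac : AbsContOn y I)
    (hxsol : ∀ᵐ t ∂(volume.restrict I), HasDerivAt x (f t (x t)) t)
    (hysol : ∀ᵐ t ∂(volume.restrict I), HasDerivAt y (f t (y t)) t)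
    (t₀ : ℝ) (ht₀ : t₀ ∈ I) (heq : x t₀ = y t₀) :
    ∀ t ∈ I, t₀ ≤ t → x t = y t := by
  obtain ⟨x', hx'i, hx'rep⟩ := hxac
  obtain ⟨y', hy'i, hy'rep⟩ := hyac
  have hImeas : MeasurableSet I := hIint.measurableSet
  have hJmeas : MeasurableSet J := hJ ▸ measurableSet_Ioo
  -- the extended difference of derivatives
  set w' : ℝ → EuclideanSpace ℝ (Fin n) := fun u => x' u - y' u with hw'def
  set h' : ℝ → EuclideanSpace ℝ (Fin n) := I.indicator w' with hh'def
  have hh'int : Integrable h' volume :=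
    (integrable_indicator_iff hImeas).2 (hx'i.sub hy'i)
  have hh'loc : LocallyIntegrable h' volume := hh'int.locallyIntegrable
  have hh'ii : ∀ a b : ℝ, IntervalIntegrable h' volume a b :=
    fun a b => locint_intervalIntegrable hh'loc a b
  -- the primitive W agrees with x - y on I
  set W : ℝ → EuclideanSpace ℝ (Fin n) := fun u => ∫ v in t₀..u, h' v with hWdef
  have hWcont : Continuous W := intervalIntegral.continuous_primitive hh'ii t₀
  have hWw : ∀ u ∈ I, W u = x u - y u := by
    intro u hu
    have hsub : uIcc t₀ u ⊆ I := hIint.uIcc_subset ht₀ hu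
    have hxii : IntervalIntegrable x' volume t₀ u :=
      intervalIntegrable_iff.2 ((hx'i.mono_set (uIoc_subset_uIcc.trans hsub)))
    have hyii : IntervalIntegrable y' volume t₀ u :=
      intervalIntegrable_iff.2 ((hy'i.mono_set (uIoc_subset_uIcc.trans hsub)))
    have h1 : x u - y u = ∫ v in t₀..u, w' v := by
      rw [hx'rep t₀ ht₀ u hu, hy'rep t₀ ht₀ u hu, hw'def, intervalIntegral.integral_sub hxii hyii,
        heq]
      abel
    rw [h1, hWdef]
    show (∫ v in t₀..u, h' v) = ∫ v in t₀..u, w' v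
    exact intervalIntegral.integral_congr fun v hv => indicator_of_mem (hsub hv) w'
  -- the boundary of I is null
  have hIN : volume (I \ interior I) = 0 := by
    have hsubs : I \ interior I ⊆ {t | IsLeast I t} ∪ {t | IsGreatest I t} := by
      rintro t ⟨htI, htni⟩
      by_contra hcon
      simp only [mem_union, mem_setOf_eq, not_or] at hcon
      obtain ⟨hnl, hng⟩ := hcon
      have h1 : ∃ u ∈ I, u < t := by
        by_contra hno
        push_neg at hno
        exact hnl ⟨htI, fun u hu => hno u hu⟩
      have h2 : ∃ v ∈ I, t < v := by
        by_contra hno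
        push_neg at hno
        exact hng ⟨htI, fun v hv => hno v hv⟩
      obtain ⟨u, huI, hut⟩ := h1
      obtain ⟨v, hvI, hvt⟩ := h2
      refine htni ?_
      rw [mem_interior]
      exact ⟨Ioo u v, (Ioo_subset_Icc_self).trans (hIint.out huI hvI), isOpen_Ioo,
        mem_Ioo.2 ⟨hut, hvt⟩⟩
    refine measure_mono_null hsubs (measure_union_null ?_ ?_)
    · exact Set.Subsingleton.measure_zero (fun t1 h1 t2 h2 => h1.unique h2) _
    · exact Set.Subsingleton.measure_zero (fun t1 h1 t2 h2 => h1.unique h2) _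
  have hae_int : ∀ᵐ t ∂(volume.restrict I), t ∈ interior I := by
    rw [ae_iff, Measure.restrict_apply' hImeas]
    refine measure_mono_null (fun t ht => ?_) hIN
    have h1 := (mem_inter_iff t _ _).mp ht
    exact (mem_diff t).mpr ⟨h1.2, h1.1⟩
  -- identification of h' with f ∘ (x, y) difference a.e. on I
  have hder : ∀ᵐ t ∂(volume.restrict I), HasDerivAt W (f t (x t) - f t (y t)) t := by
    filter_upwards [hae_int, hxsol, hysol] with t htint hx hy
    have hxy : HasDerivAt (fun u => x u - y u) (f t (x t) - f t (y t)) t := hx.sub hy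
    refine hxy.congr_of_eventuallyEq ?_
    filter_upwards [isOpen_interior.mem_nhds htint] with u hu
    exact hWw u (interior_subset hu)
  have hident : ∀ᵐ t ∂(volume.restrict I), f t (x t) - f t (y t) = h' t :=
    ae_eq_of_ae_hasDerivAt_primitive hh'loc t₀ hder
  -- pointwise one-sided bound a.e. on I
  have hbound : ∀ᵐ u ∂(volume.restrict I), (inner ℝ (W u) (h' u) : ℝ) ≤ |k u| * ‖W u‖ ^ 2 := by
    filter_upwards [hident, ae_restrict_mem hImeas] with u hid huI
    rw [← hid, hWw u huI]
    calc (inner ℝ (x u - y u) (f u (x u) - f u (y u)) : ℝ)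
        = (inner ℝ (f u (x u) - f u (y u)) (x u - y u) : ℝ) := real_inner_comm _ _
      _ ≤ k u * ‖x u - y u‖ ^ 2 := hosl u (hI huI) (x u) (hxΩ u huI) (y u) (hyΩ u huI)
      _ ≤ |k u| * ‖x u - y u‖ ^ 2 :=
          mul_le_mul_of_nonneg_right (le_abs_self _) (by positivity)
  set kk : ℝ → ℝ := J.indicator (fun u => |k u|) with hkkdef
  have hkkint : Integrable kk volume := (integrable_indicator_iff hJmeas).2 hk.abs
  have hkknn : ∀ u, 0 ≤ kk u := fun u => indicator_nonneg (fun v _ => abs_nonneg _) u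
  have hkkI : ∀ u ∈ I, kk u = |k u| := fun u hu => indicator_of_mem (hI hu) _
  -- energy identity
  have energy : ∀ s ∈ I, ∀ t ∈ I, s ≤ t →
      ‖W t‖ ^ 2 = ‖W s‖ ^ 2 + 2 * ∫ u in Ioc s t, (inner ℝ (W u) (h' u) : ℝ) := by
    intro s hs t ht hst
    have hioo : IntegrableOn h' (Ioc s t) volume := hh'int.integrableOn
    have hWdiff : ∀ u, s ≤ u → W u - W s = ∫ v in Ioc s u, h' v := by
      intro u hsu
      rw [← intervalIntegral.integral_of_le hsu]
      exact intervalIntegral.integral_interval_sub_left (hh'ii t₀ u) (hh'ii t₀ s)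
    obtain ⟨C, hC⟩ := isCompact_Icc.exists_bound_of_continuousOn
      ((hWcont.sub (continuous_const (y := W s))).continuousOn (s := Icc s t))
    have int2 : Integrable (fun u => (inner ℝ (W u - W s) (h' u) : ℝ))
        (volume.restrict (Ioc s t)) := by
      refine Integrable.mono' ((hioo.norm.const_mul C)) ?_ ?_
      · exact AEStronglyMeasurable.inner
          ((hWcont.sub continuous_const).aestronglyMeasurable.restrict)
          hioo.aestronglyMeasurable
      · filter_upwards [ae_restrict_mem measurableSet_Ioc] with u hu
        calc ‖(inner ℝ (W u - W s) (h' u) : ℝ)‖ ≤ ‖W u - W s‖ * ‖h' u‖ := norm_inner_le_norm _ _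
          _ ≤ C * ‖h' u‖ := by
              have : ‖W u - W s‖ ≤ C := hC u (Ioc_subset_Icc_self hu)
              have hn : (0:ℝ) ≤ ‖h' u‖ := norm_nonneg _
              nlinarith [norm_nonneg (W u - W s)]
    have int1 : Integrable (fun u => (inner ℝ (W s) (h' u) : ℝ))
        (volume.restrict (Ioc s t)) := hioo.const_inner _
    have hsplit : ∫ u in Ioc s t, (inner ℝ (W u) (h' u) : ℝ)
        = (∫ u in Ioc s t, (inner ℝ (W s) (h' u) : ℝ))
          + ∫ u in Ioc s t, (inner ℝ (W u - W s) (h' u) : ℝ) := by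
      rw [← integral_add int1 int2]
      refine integral_congr_ae (Filter.Eventually.of_forall fun u => ?_)
      show (inner ℝ (W u) (h' u) : ℝ)
        = (inner ℝ (W s) (h' u) : ℝ) + (inner ℝ (W u - W s) (h' u) : ℝ)
      rw [← inner_add_left]
      congr 1
      abel
    have hI1 : ∫ u in Ioc s t, (inner ℝ (W s) (h' u) : ℝ)
        = (inner ℝ (W s) (W t - W s) : ℝ) := by
      rw [integral_inner hioo (W s), ← hWdiff t hst]
    have hI2 : ∫ u in Ioc s t, (inner ℝ (W u - W s) (h' u) : ℝ)
        = (1/2) * ‖W t - W s‖ ^ 2 := by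
      have he := energy_aux hst hioo
      have hcong : ∫ u in Ioc s t, (inner ℝ (W u - W s) (h' u) : ℝ)
          = ∫ u in Ioc s t, (inner ℝ (∫ v in Ioc s u, h' v) (h' u) : ℝ) := by
        refine integral_congr_ae ?_
        filter_upwards [ae_restrict_mem measurableSet_Ioc] with u hu
        rw [hWdiff u (le_of_lt hu.1)]
      rw [hcong, he, hWdiff t hst]
    have hnorm : ‖W t‖ ^ 2 = ‖W s‖ ^ 2 + 2 * (inner ℝ (W s) (W t - W s) : ℝ)
        + ‖W t - W s‖ ^ 2 := by
      have := norm_add_sq_real (W s) (W t - W s)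
      rw [add_sub_cancel] at this
      linarith
    rw [hsplit, hI1, hI2]
    linarith
  -- integrability of kk * g on bounded intervals
  have gint : ∀ s t : ℝ, Integrable (fun u => kk u * ‖W u‖ ^ 2) (volume.restrict (Ioc s t)) := by
    intro s t
    obtain ⟨C, hC⟩ := isCompact_Icc.exists_bound_of_continuousOn
      (((hWcont.norm.pow 2)).continuousOn (s := Icc s t))
    refine Integrable.mono' ((hkkint.restrict.const_mul C)) ?_ ?_
    · exact hkkint.aestronglyMeasurable.restrict.mul
        ((hWcont.norm.pow 2)).aestronglyMeasurable.restrict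
    · filter_upwards [ae_restrict_mem measurableSet_Ioc] with u hu
      have h1 : ‖(‖W u‖ ^ 2)‖ ≤ C := hC u (Ioc_subset_Icc_self hu)
      have h2 : ‖(‖W u‖ ^ 2)‖ = ‖W u‖ ^ 2 := by
        rw [Real.norm_eq_abs]; exact abs_of_nonneg (by positivity)
      rw [h2] at h1
      have := hkknn u
      calc ‖kk u * ‖W u‖ ^ 2‖ = kk u * ‖W u‖ ^ 2 := by
            rw [Real.norm_eq_abs, abs_of_nonneg (by positivity)]
        _ ≤ kk u * C := mul_le_mul_of_nonneg_left h1 this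
        _ = C * kk u := mul_comm _ _
  -- growth inequality
  have main_ineq : ∀ s ∈ I, ∀ t ∈ I, s ≤ t →
      ‖W t‖ ^ 2 ≤ ‖W s‖ ^ 2 + 2 * ∫ u in Ioc s t, kk u * ‖W u‖ ^ 2 := by
    intro s hs t ht hst
    have hIoc : Ioc s t ⊆ I := fun u hu => hIint.out hs ht ⟨le_of_lt hu.1, hu.2⟩
    rw [energy s hs t ht hst]
    have hioo : IntegrableOn h' (Ioc s t) volume := hh'int.integrableOn
    have int_rhs := gint s t
    have int_lhs : Integrable (fun u => (inner ℝ (W u) (h' u) : ℝ))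
        (volume.restrict (Ioc s t)) := by
      obtain ⟨C', hC'⟩ := isCompact_Icc.exists_bound_of_continuousOn
        (hWcont.continuousOn (s := Icc s t))
      refine Integrable.mono' ((hioo.norm.const_mul C')) ?_ ?_
      · exact AEStronglyMeasurable.inner (hWcont.aestronglyMeasurable.restrict)
          hioo.aestronglyMeasurable
      · filter_upwards [ae_restrict_mem measurableSet_Ioc] with u hu
        calc ‖(inner ℝ (W u) (h' u) : ℝ)‖ ≤ ‖W u‖ * ‖h' u‖ := norm_inner_le_norm _ _
          _ ≤ C' * ‖h' u‖ := by
              have := hC' u (Ioc_subset_Icc_self hu)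
              have hn : (0:ℝ) ≤ ‖h' u‖ := norm_nonneg _
              nlinarith [norm_nonneg (W u)]
    have hmono : ∫ u in Ioc s t, (inner ℝ (W u) (h' u) : ℝ)
        ≤ ∫ u in Ioc s t, kk u * ‖W u‖ ^ 2 := by
      refine integral_mono_ae int_lhs int_rhs ?_
      filter_upwards [ae_restrict_of_ae_restrict_of_subset hIoc hbound,
        ae_restrict_mem measurableSet_Ioc] with u hb hu
      have := hkkI u (hIoc hu)
      rw [this]
      exact hb
    linarith
  -- primitive of kk is continuous
  have hkkii : ∀ a b : ℝ, IntervalIntegrable kk volume a b :=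
    fun a b => locint_intervalIntegrable hkkint.locallyIntegrable a b
  have hPcont : Continuous fun d => ∫ v in t₀..d, kk v :=
    intervalIntegral.continuous_primitive hkkii t₀
  have hg0 : ‖W t₀‖ ^ 2 = 0 := by
    have : W t₀ = 0 := intervalIntegral.integral_same
    rw [this]; simp
  intro T hT hT0
  set S : Set ℝ := {τ | τ ∈ Icc t₀ T ∧ ∀ u ∈ Icc t₀ τ, ‖W u‖ ^ 2 = 0} with hSdef
  have hSne : t₀ ∈ S := by
    refine ⟨⟨le_refl _, hT0⟩, fun u hu => ?_⟩
    have : u = t₀ := le_antisymm hu.2 hu.1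
    rw [this, hg0]
  have hSbdd : BddAbove S := ⟨T, fun τ hτ => hτ.1.2⟩
  set c := sSup S with hcdef
  have hct₀ : t₀ ≤ c := le_csSup hSbdd hSne
  have hcT : c ≤ T := csSup_le ⟨t₀, hSne⟩ fun τ hτ => hτ.1.2
  have hIccI : Icc t₀ T ⊆ I := hIint.out ht₀ hT
  have hcI : c ∈ I := hIccI ⟨hct₀, hcT⟩
  have hgc : ∀ u ∈ Icc t₀ c, ‖W u‖ ^ 2 = 0 := by
    intro u hu
    rcases eq_or_lt_of_le hu.2 with heqc | hltc
    · rcases eq_or_lt_of_le hu.1 with h0 | h0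
      · rw [← h0, hg0]
      · have htt : Tendsto (fun v => ‖W v‖ ^ 2) (𝓝[<] u) (𝓝 (‖W u‖ ^ 2)) :=
          ((hWcont.norm.pow 2).tendsto u).mono_left nhdsWithin_le_nhds
        have hzero : (fun v => ‖W v‖ ^ 2) =ᶠ[𝓝[<] u] fun _ => (0:ℝ) := by
          filter_upwards [Ioo_mem_nhdsLT_of_mem
            (show u ∈ Ioc t₀ u from ⟨h0, le_refl u⟩)] with v hv
          obtain ⟨τ, hτS, hvτ⟩ := exists_lt_of_lt_csSup ⟨t₀, hSne⟩
            (show v < sSup S from hcdef ▸ lt_of_lt_of_le hv.2 heqc.le)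
          exact hτS.2 v ⟨le_of_lt hv.1, le_of_lt hvτ⟩
        exact tendsto_nhds_unique (htt.congr' hzero) tendsto_const_nhds
    · obtain ⟨τ, hτS, huτ⟩ := exists_lt_of_lt_csSup ⟨t₀, hSne⟩ hltc
      exact hτS.2 u ⟨hu.1, le_of_lt huτ⟩
  have hceq : c = T := by
    by_contra hne
    have hclt : c < T := lt_of_le_of_ne hcT hne
    have htend : Tendsto (fun d => ∫ v in c..d, kk v) (𝓝 c) (𝓝 0) := by
      have heq' : ∀ d, ∫ v in c..d, kk v = (∫ v in t₀..d, kk v) - ∫ v in t₀..c, kk v :=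
        fun d => (intervalIntegral.integral_interval_sub_left (hkkii t₀ d) (hkkii t₀ c)).symm
      have h1 : Tendsto (fun d => (∫ v in t₀..d, kk v) - ∫ v in t₀..c, kk v) (𝓝 c)
          (𝓝 ((∫ v in t₀..c, kk v) - ∫ v in t₀..c, kk v)) :=
        (hPcont.tendsto c).sub tendsto_const_nhds
      rw [sub_self] at h1
      exact (Filter.Tendsto.congr (fun d => (heq' d).symm)) h1
    have hev : ∀ᶠ d in 𝓝 c, dist (∫ v in c..d, kk v) 0 < 1/8 :=
      Metric.tendsto_nhds.mp htend (1/8) (by norm_num)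
    obtain ⟨δ, hδpos, hδ⟩ := Metric.eventually_nhds_iff.mp hev
    set d := min (c + δ/2) T with hddef
    have hcd : c < d := lt_min (by linarith) hclt
    have hdT : d ≤ T := min_le_right _ _
    have hddist : dist d c < δ := by
      rw [Real.dist_eq, abs_of_nonneg (by linarith [le_of_lt hcd] : (0:ℝ) ≤ d - c)]
      have : d ≤ c + δ/2 := min_le_left _ _
      linarith
    have hIccdI : Icc c d ⊆ I := fun u hu => hIccI ⟨le_trans hct₀ hu.1, le_trans hu.2 hdT⟩
    obtain ⟨m, hm, hmax⟩ := isCompact_Icc.exists_isMaxOn (nonempty_Icc.2 (le_of_lt hcd))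
      ((hWcont.norm.pow 2).continuousOn (s := Icc c d))
    have hgm_nonneg : (0:ℝ) ≤ ‖W m‖ ^ 2 := by positivity
    have hbnd : ∀ τ ∈ Icc c d, ‖W τ‖ ^ 2 ≤ (1/2) * ‖W m‖ ^ 2 := by
      intro τ hτ
      have hτI : τ ∈ I := hIccdI hτ
      have h1 := main_ineq c hcI τ hτI hτ.1
      have hgc0 : ‖W c‖ ^ 2 = 0 := hgc c ⟨hct₀, le_refl c⟩
      have h2 : ∫ u in Ioc c τ, kk u * ‖W u‖ ^ 2 ≤ ∫ u in Ioc c τ, kk u * ‖W m‖ ^ 2 := by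
        refine integral_mono_ae (gint c τ) (hkkint.restrict.mul_const _) ?_
        filter_upwards [ae_restrict_mem measurableSet_Ioc] with u hu
        have humem : u ∈ Icc c d := ⟨le_of_lt hu.1, le_trans hu.2 hτ.2⟩
        exact mul_le_mul_of_nonneg_left (isMaxOn_iff.mp hmax u humem) (hkknn u)
      have h3 : ∫ u in Ioc c τ, kk u * ‖W m‖ ^ 2 = (∫ u in Ioc c τ, kk u) * ‖W m‖ ^ 2 :=
        integral_mul_const _ _
      have h4 : ∫ u in Ioc c τ, kk u < 1/8 := by
        have hdist' : dist τ c < δ := by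
          rw [Real.dist_eq, abs_of_nonneg (by linarith [hτ.1] : (0:ℝ) ≤ τ - c)]
          have h5 := hτ.2
          rw [Real.dist_eq, abs_of_nonneg (by linarith [le_of_lt hcd] : (0:ℝ) ≤ d - c)] at hddist
          linarith
        have := hδ hdist'
        rw [Real.dist_eq, sub_zero] at this
        calc ∫ u in Ioc c τ, kk u = ∫ v in c..τ, kk v :=
              (intervalIntegral.integral_of_le hτ.1).symm
          _ ≤ |∫ v in c..τ, kk v| := le_abs_self _
          _ < 1/8 := this
      have h6 : (∫ u in Ioc c τ, kk u) * ‖W m‖ ^ 2 ≤ (1/8) * ‖W m‖ ^ 2 :=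
        mul_le_mul_of_nonneg_right (le_of_lt h4) hgm_nonneg
      calc ‖W τ‖ ^ 2 ≤ ‖W c‖ ^ 2 + 2 * ∫ u in Ioc c τ, kk u * ‖W u‖ ^ 2 := h1
        _ ≤ 0 + 2 * ((1/8) * ‖W m‖ ^ 2) := by
            rw [hgc0]
            have := le_trans h2 (le_of_eq h3)
            nlinarith [le_trans this h6]
        _ ≤ (1/2) * ‖W m‖ ^ 2 := by nlinarith
    have hgm0 : ‖W m‖ ^ 2 ≤ 0 := by
      have := hbnd m hm; linarith
    have hzero : ∀ τ ∈ Icc c d, ‖W τ‖ ^ 2 = 0 := fun τ hτ =>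
      le_antisymm (le_trans (isMaxOn_iff.mp hmax τ hτ) hgm0) (by positivity)
    have hdS : d ∈ S := by
      refine ⟨⟨le_trans hct₀ (le_of_lt hcd), hdT⟩, fun u hu => ?_⟩
      rcases le_total u c with h | h
      · exact hgc u ⟨hu.1, h⟩
      · exact hzero u ⟨h, hu.2⟩
    have := le_csSup hSbdd hdS
    linarith
  have hgT : ‖W T‖ ^ 2 = 0 := hgc T (by rw [hceq]; exact ⟨hT0, le_refl T⟩)
  have hWT : W T = 0 := by
    have h1 : ‖W T‖ = 0 := by nlinarith [norm_nonneg (W T)]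
    exact norm_eq_zero.mp h1
  have := hWw T hT
  rw [hWT] at this
  exact (sub_eq_zero.mp this.symm)
end
end
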